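/- arXiv:2201.02197 — 6 statements merged into one kernel-verified Lean document; each statement's English description precedes it below -/
import Mathlib

section
/- For every configuration of n regions on ℝ with density |x| there exists a condensed configuration of n regions with the same list of weighted masses whose total weighted perimeter is at most that of the original configuration; in particular, the new configuration consists of at most 2n intervals, each region consisting of at most 2 intervals, and 0 belongs to the union of its intervals. -/
open MeasureTheory Finset

/-- A configuration of `n` regions made of `k` nondegenerate closed intervals
with pairwise disjoint interiors, each interval labeled by one of the regions. -/
structure Config (n k : ℕ) where
  lo : Fin k → ℝ
  hi : Fin k → ℝ
  lab : Fin k → Fin n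
  nondeg : ∀ j, lo j < hi j
  disj : ∀ i j, i ≠ j → Set.Ioo (lo i) (hi i) ∩ Set.Ioo (lo j) (hi j) = ∅

namespace Config

variable {n k : ℕ}

/-- Weighted mass of region `i` with respect to the density `|x|`. -/
noncomputable def mass (C : Config n k) (i : Fin n) : ℝ :=
  ∑ j ∈ univ.filter (fun j => C.lab j = i), ∫ x in C.lo j..C.hi j, |x|

/-- The (finite) set of all endpoints of intervals of the configuration. -/
noncomputable def endpointSet (C : Config n k) : Finset ℝ :=
  image C.lo univ ∪ image C.hi univ

/-- Total weighted perimeter with respect to the density `|x|`. -/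
noncomputable def perim (C : Config n k) : ℝ :=
  ∑ x ∈ C.endpointSet, |x|

/-- A configuration is condensed if the union of its intervals is a closed interval
containing `0` and each region has at most one interval contained in `(-∞,0]`
and at most one interval contained in `[0,∞)`. -/
def Condensed (C : Config n k) : Prop :=
  (∃ a b : ℝ, a ≤ 0 ∧ 0 ≤ b ∧ (⋃ j, Set.Icc (C.lo j) (C.hi j)) = Set.Icc a b) ∧
  ∀ i : Fin n,
    (univ.filter (fun j => C.lab j = i ∧ C.hi j ≤ 0)).card ≤ 1 ∧
    (univ.filter (fun j => C.lab j = i ∧ 0 ≤ C.lo j)).card ≤ 1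

/-- A configuration is isoperimetric if its total weighted perimeter is least among all
configurations of `n` regions with the same list of weighted masses. -/
def Isoperimetric (C : Config n k) : Prop :=
  ∀ (k' : ℕ) (C' : Config n k'), (∀ i, C'.mass i = C.mass i) → C.perim ≤ C'.perim

end Config

/-!
Reflecting in `0`, it suffices to treat `[0, ∞)`. Let `p i` be the weighted mass of region `i`
inside `(0, ∞)` and `e i` its rightmost point. Stack the pieces of mass `p i` as adjacent intervals
starting at `0`, in increasing order of `e i`. All regions with `e j ≤ e i` lie in `(0, e i]`, so
their total mass is at most `∫ x in 0..e i, |x| = e i ^ 2 / 2`, and hence the interval given to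
region `i` ends at a point `≤ e i`. The `e i` of regions with `p i > 0` are distinct positive
endpoints of the original configuration (and similarly on the negative side), so the right ends
of the stacked intervals, which carry the whole new perimeter, sum to at most the old one.
-/

lemma integral_abs_of_nonneg {a b : ℝ} (ha : 0 ≤ a) (hb : 0 ≤ b) :
    ∫ x in a..b, |x| = b ^ 2 / 2 - a ^ 2 / 2 := by
  rw [intervalIntegral.integral_congr (g := fun x => x)
    fun x hx => abs_of_nonneg ((le_min ha hb).trans hx.1), integral_id]
  ring

lemma intervalIntegral_eq_min_add_max {f : ℝ → ℝ} (hf : Continuous f) (a b c : ℝ) :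
    ∫ x in a..b, f x = (∫ x in min a c..min b c, f x) + ∫ x in max a c..max b c, f x := by
  have from_c (u v : ℝ) : ∫ x in u..v, f x = (∫ x in c..v, f x) - ∫ x in c..u, f x :=
    (intervalIntegral.integral_interval_sub_left (hf.intervalIntegrable _ _)
      (hf.intervalIntegrable _ _)).symm
  have split (x : ℝ) : ∫ t in c..x, f t = (∫ t in c..min x c, f t) + ∫ t in c..max x c, f t := by
    rcases le_total x c with h | h <;> simp [h]
  rw [from_c a, from_c (min a c), from_c (max a c), split a, split b]
  ring

lemma sum_integral_le_of_pairwiseDisjoint {ι : Type*} {s : Finset ι} {a b : ι → ℝ} {c d : ℝ}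
    {f : ℝ → ℝ} (hf : ∀ x ∈ Set.Ioc c d, 0 ≤ f x) (hfi : IntegrableOn f (Set.Ioc c d))
    (hab : ∀ j ∈ s, a j ≤ b j) (hsub : ∀ j ∈ s, c ≤ a j ∧ b j ≤ d)
    (hdisj : (s : Set ι).PairwiseDisjoint fun j => Set.Ioo (a j) (b j)) :
    ∑ j ∈ s, ∫ x in a j..b j, f x ≤ ∫ x in Set.Ioc c d, f x := by
  have hIoo : ∀ j ∈ s, Set.Ioo (a j) (b j) ⊆ Set.Ioc c d := fun j hj =>
    Set.Ioo_subset_Ioc_self.trans (Set.Ioc_subset_Ioc (hsub j hj).1 (hsub j hj).2)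
  calc ∑ j ∈ s, ∫ x in a j..b j, f x = ∑ j ∈ s, ∫ x in Set.Ioo (a j) (b j), f x :=
        sum_congr rfl fun j hj => by
          rw [intervalIntegral.integral_of_le (hab j hj), integral_Ioc_eq_integral_Ioo]
    _ = ∫ x in ⋃ j ∈ s, Set.Ioo (a j) (b j), f x :=
        (integral_biUnion_finset s (fun _ _ => measurableSet_Ioo) hdisj
          fun j hj => hfi.mono_set (hIoo j hj)).symm
    _ ≤ ∫ x in Set.Ioc c d, f x :=
        setIntegral_mono_set hfi (ae_restrict_of_forall_mem measurableSet_Ioc hf)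
          (Set.iUnion₂_subset hIoo).eventuallyLE

lemma Set.Ioo_inter_Ioo_eq_empty_of_le {α : Type*} [Preorder α] {a b c d : α} (h : b ≤ c) :
    Set.Ioo a b ∩ Set.Ioo c d = ∅ :=
  Set.eq_empty_of_forall_notMem fun _ hx => (hx.1.2.trans_le h).not_gt hx.2.1

lemma Set.Ioo_max_max_subset_Ioo {α : Type*} [LinearOrder α] (a b c : α) :
    Set.Ioo (max a c) (max b c) ⊆ Set.Ioo a b :=
  fun _ hx => ⟨(le_max_left _ _).trans_lt hx.1,
    (lt_max_iff.1 hx.2).resolve_right ((le_max_right _ _).trans_lt hx.1).not_gt⟩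

noncomputable def Finset.sortedEquiv {α β : Type*} [LinearOrder β] (s : Finset α) (f : α → β) :
    Fin s.card ≃ s :=
  (Tuple.sort fun u => f (s.equivFin.symm u)).trans s.equivFin.symm

lemma Finset.monotone_sortedEquiv {α β : Type*} [LinearOrder β] (s : Finset α) (f : α → β) :
    Monotone fun u => f (s.sortedEquiv f u) :=
  Tuple.monotone_sort fun u => f (s.equivFin.symm u)

lemma Fin.card_filter_univ_add {p q : ℕ} (P : Fin (p + q) → Prop) [DecidablePred P] :
    #{j | P j} = #{u | P (Fin.castAdd q u)} + #{v | P (Fin.natAdd p v)} := by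
  simp only [card_filter, Fin.sum_univ_add]

lemma Function.Injective.card_filter_le_one {α β : Type*} [Fintype α] {f : α → β}
    (hf : Function.Injective f) {b : β} {P : α → Prop} [DecidablePred P]
    (hP : ∀ a, P a → f a = b) : #{a | P a} ≤ 1 :=
  card_le_one.2 fun _ ha _ hb =>
    hf ((hP _ (mem_filter.1 ha).2).trans (hP _ (mem_filter.1 hb).2).symm)

section Stack

variable {ι : Type*} [LinearOrder ι] [LocallyFiniteOrderBot ι] (w : ι → ℝ)

/-- On `[0, ∞)` the weight `|x|` has primitive `x² / 2`, so the interval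
`[stackLo w u, stackHi w u]` has weighted mass `w u` and these intervals follow one another. -/
noncomputable def stackLo (u : ι) : ℝ := √(2 * ∑ v ∈ Iio u, w v)

noncomputable def stackHi (u : ι) : ℝ := √(2 * ∑ v ∈ Iic u, w v)

variable {w}

lemma stackLo_nonneg (u : ι) : 0 ≤ stackLo w u := Real.sqrt_nonneg _

lemma stackHi_nonneg (u : ι) : 0 ≤ stackHi w u := Real.sqrt_nonneg _

lemma sum_Iic_eq_add_sum_Iio (u : ι) : ∑ v ∈ Iic u, w v = w u + ∑ v ∈ Iio u, w v := by
  rw [← Iio_insert, sum_insert notMem_Iio_self]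

lemma stackLo_lt_stackHi (hw : ∀ v, 0 ≤ w v) {u : ι} (hu : 0 < w u) :
    stackLo w u < stackHi w u := by
  refine Real.sqrt_lt_sqrt (by have := sum_nonneg fun v (_ : v ∈ Iio u) => hw v; positivity) ?_
  rw [sum_Iic_eq_add_sum_Iio]
  linarith

lemma stackHi_le_stackLo (hw : ∀ v, 0 ≤ w v) {u v : ι} (h : u < v) :
    stackHi w u ≤ stackLo w v :=
  Real.sqrt_le_sqrt <| mul_le_mul_of_nonneg_left (sum_le_sum_of_subset_of_nonneg
    (fun _ hx => mem_Iio.2 ((mem_Iic.1 hx).trans_lt h)) fun v _ _ => hw v) zero_le_two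

lemma integral_abs_stack (hw : ∀ v, 0 ≤ w v) (u : ι) :
    ∫ x in stackLo w u..stackHi w u, |x| = w u := by
  have hlo := sum_nonneg fun v (_ : v ∈ Iio u) => hw v
  rw [integral_abs_of_nonneg (stackLo_nonneg u) (stackHi_nonneg u), stackLo, stackHi,
    sum_Iic_eq_add_sum_Iio, Real.sq_sqrt (by linarith [hw u]), Real.sq_sqrt (by linarith)]
  ring

lemma stackLo_eq_zero_or (u : ι) : stackLo w u = 0 ∨ ∃ v < u, stackLo w u = stackHi w v := by
  rcases (Iio u).eq_empty_or_nonempty with h | h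
  · simp [stackLo, h]
  · refine Or.inr ⟨(Iio u).max' h, mem_Iio.1 (max'_mem _ h), ?_⟩
    have : Iio u = Iic ((Iio u).max' h) := by
      ext v
      exact ⟨fun hv => mem_Iic.2 (le_max' _ v hv),
        fun hv => mem_Iio.2 ((mem_Iic.1 hv).trans_lt (mem_Iio.1 (max'_mem _ h)))⟩
    exact congrArg (fun s => √(2 * ∑ v ∈ s, w v)) this

lemma stackHi_le {u : ι} {E : ℝ} (hE : 0 ≤ E) (h : ∑ v ∈ Iic u, w v ≤ E ^ 2 / 2) :
    stackHi w u ≤ E :=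
  (Real.sqrt_le_left hE).2 (by linarith)

variable [Fintype ι]

lemma iUnion_stack_subset (hw : ∀ v, 0 ≤ w v) :
    ⋃ u, Set.Icc (stackLo w u) (stackHi w u) ⊆ Set.Icc 0 √(2 * ∑ u, w u) :=
  Set.iUnion_subset fun u _ hx => ⟨(stackLo_nonneg u).trans hx.1, hx.2.trans <|
    Real.sqrt_le_sqrt <| mul_le_mul_of_nonneg_left
      (sum_le_sum_of_subset_of_nonneg (subset_univ _) fun v _ _ => hw v) zero_le_two⟩

/-- The first stacked interval reaching `x` starts below `x`, since it starts at `0` or where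
its predecessor ends. -/
lemma Icc_subset_iUnion_stack [Nonempty ι] :
    Set.Icc 0 √(2 * ∑ u, w u) ⊆ ⋃ u, Set.Icc (stackLo w u) (stackHi w u) := by
  rintro x ⟨hx0, hxT⟩
  obtain ⟨m, hm⟩ := Finite.exists_max (id : ι → ι)
  have hIic : Iic m = univ := eq_univ_of_forall fun v => mem_Iic.2 (hm v)
  have hxm : m ∈ univ.filter fun u => x ≤ stackHi w u := by simpa [stackHi, hIic] using hxT
  obtain ⟨u, hu, hmin⟩ := (univ.filter fun u => x ≤ stackHi w u).exists_min_image id ⟨m, hxm⟩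
  refine Set.mem_iUnion.2 ⟨u, ?_, (mem_filter.1 hu).2⟩
  rcases stackLo_eq_zero_or (w := w) u with h | ⟨v, hvu, hv⟩
  · exact h ▸ hx0
  · rw [hv]
    by_contra hxv
    exact (hmin v (mem_filter.2 ⟨mem_univ v, (not_le.1 hxv).le⟩)).not_gt hvu

lemma insert_zero_iUnion_stack (hw : ∀ v, 0 ≤ w v) :
    insert 0 (⋃ u, Set.Icc (stackLo w u) (stackHi w u)) = Set.Icc 0 √(2 * ∑ u, w u) := by
  refine (Set.insert_subset (Set.left_mem_Icc.2 (Real.sqrt_nonneg _))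
    (iUnion_stack_subset hw)).antisymm ?_
  cases isEmpty_or_nonempty ι
  · simp
  · exact Icc_subset_iUnion_stack.trans (Set.subset_insert _ _)

end Stack

namespace Config

variable {n k p q : ℕ}

lemma hi_injective (C : Config n k) : Function.Injective C.hi := by
  intro a b h
  by_contra hne
  obtain ⟨x, hx⟩ := Set.nonempty_Ioo.2 (max_lt (h ▸ C.nondeg a) (C.nondeg b))
  refine Set.notMem_empty x (C.disj a b hne ▸ ⟨⟨?_, h ▸ hx.2⟩, ?_, hx.2⟩)
  · exact (le_max_left _ _).trans_lt hx.1
  · exact (le_max_right _ _).trans_lt hx.1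

lemma pairwiseDisjoint_Ioo (C : Config n k) (s : Set (Fin k)) :
    s.PairwiseDisjoint fun j => Set.Ioo (C.lo j) (C.hi j) :=
  fun i _ j _ h => Set.disjoint_iff_inter_eq_empty.2 (C.disj i j h)

def carrier (C : Config n k) : Set ℝ := ⋃ j, Set.Icc (C.lo j) (C.hi j)

def neg (C : Config n k) : Config n k where
  lo j := -C.hi j
  hi j := -C.lo j
  lab := C.lab
  nondeg j := neg_lt_neg (C.nondeg j)
  disj i j h := by rw [← Set.neg_Ioo, ← Set.neg_Ioo, ← Set.inter_neg, C.disj i j h, Set.neg_empty]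

section Neg

variable (C : Config n k)

@[simp] lemma neg_lo (j : Fin k) : C.neg.lo j = -C.hi j := rfl
@[simp] lemma neg_hi (j : Fin k) : C.neg.hi j = -C.lo j := rfl
@[simp] lemma neg_lab : C.neg.lab = C.lab := rfl

lemma mass_neg (i : Fin n) : C.neg.mass i = C.mass i :=
  sum_congr rfl fun j _ => by
    rw [neg_lo, neg_hi, ← intervalIntegral.integral_comp_neg]
    simp only [abs_neg]

lemma endpointSet_neg : C.neg.endpointSet = C.endpointSet.image Neg.neg := by
  simp only [endpointSet, image_union, image_image]
  exact union_comm _ _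

lemma perim_neg : C.neg.perim = C.perim := by
  rw [perim, endpointSet_neg, sum_image neg_injective.injOn]
  simp only [abs_neg, perim]

lemma carrier_neg : C.neg.carrier = -C.carrier := by
  simp only [carrier, Set.iUnion_neg, Set.neg_Icc, neg_lo, neg_hi]

end Neg

def append (A : Config n p) (B : Config n q) (h : ∀ u v, A.hi u ≤ B.lo v) :
    Config n (p + q) where
  lo := Fin.addCases A.lo B.lo
  hi := Fin.addCases A.hi B.hi
  lab := Fin.addCases A.lab B.lab
  nondeg j := by cases j using Fin.addCases <;> simp [A.nondeg, B.nondeg]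
  disj i j hij := by
    cases i using Fin.addCases <;> cases j using Fin.addCases <;>
      simp only [Fin.addCases_left, Fin.addCases_right]
    · exact A.disj _ _ fun h => hij (h ▸ rfl)
    · exact Set.Ioo_inter_Ioo_eq_empty_of_le (h _ _)
    · exact Set.inter_comm _ _ ▸ Set.Ioo_inter_Ioo_eq_empty_of_le (h _ _)
    · exact B.disj _ _ fun h => hij (h ▸ rfl)

section Append

variable (A : Config n p) (B : Config n q) (h : ∀ u v, A.hi u ≤ B.lo v)

@[simp] lemma append_lo_castAdd (u : Fin p) : (A.append B h).lo (Fin.castAdd q u) = A.lo u := by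
  simp [append]
@[simp] lemma append_hi_castAdd (u : Fin p) : (A.append B h).hi (Fin.castAdd q u) = A.hi u := by
  simp [append]
@[simp] lemma append_lab_castAdd (u : Fin p) :
    (A.append B h).lab (Fin.castAdd q u) = A.lab u := by
  simp [append]
@[simp] lemma append_lo_natAdd (v : Fin q) : (A.append B h).lo (Fin.natAdd p v) = B.lo v := by
  simp [append]
@[simp] lemma append_hi_natAdd (v : Fin q) : (A.append B h).hi (Fin.natAdd p v) = B.hi v := by
  simp [append]
@[simp] lemma append_lab_natAdd (v : Fin q) :
    (A.append B h).lab (Fin.natAdd p v) = B.lab v := by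
  simp [append]

lemma mass_append (i : Fin n) : (A.append B h).mass i = A.mass i + B.mass i := by
  simp only [mass, sum_filter, Fin.sum_univ_add, append_lab_castAdd, append_lo_castAdd,
    append_hi_castAdd, append_lab_natAdd, append_lo_natAdd, append_hi_natAdd]

lemma perim_append_le : (A.append B h).perim ≤ A.perim + B.perim := by
  have hsub : (A.append B h).endpointSet ⊆ A.endpointSet ∪ B.endpointSet := by
    intro x hx
    simp only [endpointSet, mem_union, mem_image, mem_univ, true_and] at hx ⊢
    rcases hx with ⟨j, rfl⟩ | ⟨j, rfl⟩ <;> cases j using Fin.addCases <;> simp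
  calc (A.append B h).perim ≤ ∑ x ∈ A.endpointSet ∪ B.endpointSet, |x| :=
        sum_le_sum_of_subset_of_nonneg hsub fun _ _ _ => abs_nonneg _
    _ ≤ A.perim + B.perim := by
        rw [perim, perim, ← sum_union_inter]
        exact le_add_of_nonneg_right (sum_nonneg fun _ _ => abs_nonneg _)

lemma carrier_append : (A.append B h).carrier = A.carrier ∪ B.carrier := by
  rw [carrier, ← finSumFinEquiv.surjective.iUnion_comp, Set.iUnion_sum]
  simp [carrier]

end Append

noncomputable def stack (w : Fin p → ℝ) (hw : ∀ u, 0 < w u) (lab : Fin p → Fin n) :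
    Config n p where
  lo := stackLo w
  hi := stackHi w
  lab := lab
  nondeg u := stackLo_lt_stackHi (fun v => (hw v).le) (hw u)
  disj u v huv := by
    rcases huv.lt_or_gt with h | h
    · exact Set.Ioo_inter_Ioo_eq_empty_of_le (stackHi_le_stackLo (fun v => (hw v).le) h)
    · exact Set.inter_comm _ _ ▸
        Set.Ioo_inter_Ioo_eq_empty_of_le (stackHi_le_stackLo (fun v => (hw v).le) h)

section Stack

variable (w : Fin p → ℝ) (hw : ∀ u, 0 < w u) (lab : Fin p → Fin n)

lemma mass_stack (i : Fin n) : (stack w hw lab).mass i = ∑ u with lab u = i, w u :=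
  sum_congr rfl fun u _ => integral_abs_stack (fun v => (hw v).le) u

lemma perim_stack_le : (stack w hw lab).perim ≤ ∑ u, stackHi w u := by
  have hsub : (stack w hw lab).endpointSet ⊆ insert 0 (univ.image (stackHi w)) := by
    intro x hx
    simp only [endpointSet, mem_union, mem_image, mem_univ, true_and] at hx
    rcases hx with ⟨u, rfl⟩ | ⟨u, rfl⟩
    · rcases stackLo_eq_zero_or (w := w) u with h | ⟨v, -, hv⟩
      · exact h ▸ mem_insert_self _ _
      · exact mem_insert_of_mem (mem_image.2 ⟨v, mem_univ v, hv.symm⟩)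
    · exact mem_insert_of_mem (mem_image_of_mem _ (mem_univ u))
  calc (stack w hw lab).perim ≤ ∑ x ∈ insert 0 (univ.image (stackHi w)), |x| :=
        sum_le_sum_of_subset_of_nonneg hsub fun _ _ _ => abs_nonneg _
    _ = ∑ x ∈ univ.image (stackHi w), |x| := sum_insert_of_eq_zero_if_notMem fun _ => abs_zero
    _ ≤ ∑ u, |stackHi w u| := sum_image_le_of_nonneg fun _ _ => abs_nonneg _
    _ = ∑ u, stackHi w u := sum_congr rfl fun u _ => abs_of_nonneg (stackHi_nonneg u)

lemma insert_zero_carrier_stack :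
    insert 0 (stack w hw lab).carrier = Set.Icc 0 √(2 * ∑ u, w u) :=
  insert_zero_iUnion_stack fun v => (hw v).le

lemma zero_mem_carrier_stack (hp : 0 < p) : 0 ∈ (stack w hw lab).carrier :=
  haveI : Nonempty (Fin p) := ⟨⟨0, hp⟩⟩
  Icc_subset_iUnion_stack (Set.left_mem_Icc.2 (Real.sqrt_nonneg _))

end Stack

noncomputable def posMass (C : Config n k) (i : Fin n) : ℝ :=
  ∑ j with C.lab j = i, ∫ x in max (C.lo j) 0..max (C.hi j) 0, |x|

noncomputable def reach (C : Config n k) (i : Fin n) : ℝ :=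
  (insert 0 ((univ.filter (C.lab · = i)).image C.hi)).max' (insert_nonempty _ _)

noncomputable def posRegions (C : Config n k) : Finset (Fin n) := {i | 0 < C.posMass i}

section PosMass

variable (C : Config n k)

lemma integral_abs_max_nonneg (j : Fin k) : 0 ≤ ∫ x in max (C.lo j) 0..max (C.hi j) 0, |x| :=
  intervalIntegral.integral_nonneg (max_le_max_right 0 (C.nondeg j).le) fun _ _ => abs_nonneg _

lemma posMass_nonneg (i : Fin n) : 0 ≤ C.posMass i :=
  sum_nonneg fun j _ => C.integral_abs_max_nonneg j

lemma mass_eq_posMass_add_posMass_neg (i : Fin n) : C.mass i = C.posMass i + C.neg.posMass i := by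
  rw [mass, posMass, posMass, neg_lab, ← sum_add_distrib]
  refine sum_congr rfl fun j _ => ?_
  rw [intervalIntegral_eq_min_add_max continuous_abs _ _ 0, add_comm, neg_lo, neg_hi,
    ← neg_neg (min (C.lo j) 0), ← neg_neg (min (C.hi j) 0), ← intervalIntegral.integral_comp_neg]
  simp only [abs_neg, ← max_neg_neg, neg_zero]

lemma hi_le_reach {j : Fin k} {i : Fin n} (h : C.lab j = i) : C.hi j ≤ C.reach i :=
  le_max' _ (C.hi j) (mem_insert_of_mem (mem_image_of_mem _ (mem_filter.2 ⟨mem_univ _, h⟩)))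

lemma reach_nonneg (i : Fin n) : 0 ≤ C.reach i := le_max' _ _ (mem_insert_self _ _)

lemma exists_hi_eq_reach {i : Fin n} (h : 0 < C.posMass i) :
    ∃ j, C.lab j = i ∧ C.hi j = C.reach i ∧ 0 < C.reach i := by
  obtain ⟨j, hj, hpos⟩ : ∃ j, C.lab j = i ∧ 0 < C.hi j := by
    by_contra! hneg
    refine h.ne' (sum_eq_zero fun j hj => ?_)
    have hhi := hneg j (mem_filter.1 hj).2
    rw [max_eq_right hhi, max_eq_right ((C.nondeg j).le.trans hhi), intervalIntegral.integral_same]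
  have hreach := hpos.trans_le (C.hi_le_reach hj)
  rcases mem_insert.1 (max'_mem (insert 0 ((univ.filter (C.lab · = i)).image C.hi))
    (insert_nonempty _ _)) with h0 | hmem
  · exact absurd h0 hreach.ne'
  · obtain ⟨j', hj', he⟩ := mem_image.1 hmem
    exact ⟨j', (mem_filter.1 hj').2, he, hreach⟩

lemma reach_injOn : Set.InjOn C.reach C.posRegions := by
  intro a ha b hb hab
  obtain ⟨ja, rfl, hja, -⟩ := C.exists_hi_eq_reach (mem_filter.1 ha).2
  obtain ⟨jb, rfl, hjb, -⟩ := C.exists_hi_eq_reach (mem_filter.1 hb).2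
  rw [C.hi_injective (hja.trans (hab.trans hjb.symm))]

/-- The positive parts of the regions in `T` are disjoint pieces of `(0, E]`, whose weighted
mass is `E ^ 2 / 2`. -/
lemma sum_posMass_le (T : Finset (Fin n)) {E : ℝ} (hE : ∀ i ∈ T, C.reach i ≤ E) :
    ∑ i ∈ T, C.posMass i ≤ E ^ 2 / 2 := by
  have hsub : ∀ j ∈ univ.filter (C.lab · ∈ T), 0 ≤ max (C.lo j) 0 ∧ max (C.hi j) 0 ≤ E :=
    fun j hj =>
      have hj := hE _ (mem_filter.1 hj).2
      ⟨le_max_right _ _, max_le ((C.hi_le_reach rfl).trans hj) ((C.reach_nonneg _).trans hj)⟩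
  calc ∑ i ∈ T, C.posMass i
      = ∑ j with C.lab j ∈ T, ∫ x in max (C.lo j) 0..max (C.hi j) 0, |x| :=
        sum_fiberwise_eq_sum_filter _ _ _ _
    _ ≤ ∫ x in Set.Ioc 0 E, |x| :=
        sum_integral_le_of_pairwiseDisjoint (fun x _ => abs_nonneg x)
          continuous_abs.integrableOn_Ioc (fun j _ => max_le_max_right 0 (C.nondeg j).le) hsub
          ((C.pairwiseDisjoint_Ioo _).mono_on fun j _ => Set.Ioo_max_max_subset_Ioo _ _ _)
    _ ≤ E ^ 2 / 2 := by
        rcases le_or_gt 0 E with hE0 | hE0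
        · rw [← intervalIntegral.integral_of_le hE0, integral_abs_of_nonneg le_rfl hE0]
          linarith
        · rw [Set.Ioc_eq_empty (not_lt.2 hE0.le), setIntegral_empty]
          positivity

lemma sum_reach_le : ∑ i ∈ C.posRegions, C.reach i ≤ ∑ x ∈ C.endpointSet, max x 0 := by
  have hsub : C.posRegions.image C.reach ⊆ C.endpointSet := by
    intro x hx
    obtain ⟨i, hi, rfl⟩ := mem_image.1 hx
    obtain ⟨j, -, hj, -⟩ := C.exists_hi_eq_reach (mem_filter.1 hi).2
    exact mem_union_right _ (hj ▸ mem_image_of_mem _ (mem_univ j))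
  calc ∑ i ∈ C.posRegions, C.reach i = ∑ x ∈ C.posRegions.image C.reach, max x 0 := by
        rw [sum_image C.reach_injOn]
        exact sum_congr rfl fun i _ => (max_eq_left (C.reach_nonneg i)).symm
    _ ≤ ∑ x ∈ C.endpointSet, max x 0 :=
        sum_le_sum_of_subset_of_nonneg hsub fun _ _ _ => le_max_right _ _

lemma perim_eq_sum_max_add_sum_max_neg :
    C.perim = ∑ x ∈ C.endpointSet, max x 0 + ∑ x ∈ C.neg.endpointSet, max x 0 := by
  rw [perim, endpointSet_neg, sum_image neg_injective.injOn, ← sum_add_distrib]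
  exact sum_congr rfl fun x _ => (max_zero_add_max_neg_zero_eq_abs_self x).symm

lemma posRegions_nonempty_of_hi_pos {j : Fin k} (h : 0 < C.hi j) : C.posRegions.Nonempty := by
  refine ⟨C.lab j, mem_filter.2 ⟨mem_univ _, ?_⟩⟩
  calc 0 < ∫ x in max (C.lo j) 0..max (C.hi j) 0, |x| := by
        rw [max_eq_left h.le, integral_abs_of_nonneg (le_max_right _ _) h.le]
        nlinarith [max_lt (C.nondeg j) h, le_max_right (C.lo j) 0]
    _ ≤ C.posMass (C.lab j) :=
        single_le_sum (fun j _ => C.integral_abs_max_nonneg j) (mem_filter.2 ⟨mem_univ _, rfl⟩)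

end PosMass

section Condense

variable (C : Config n k)

noncomputable def sortedRegion (u : Fin #C.posRegions) : Fin n :=
  C.posRegions.sortedEquiv C.reach u

lemma sortedRegion_mem (u : Fin #C.posRegions) : C.sortedRegion u ∈ C.posRegions :=
  (C.posRegions.sortedEquiv C.reach u).2

lemma sortedRegion_injective : Function.Injective C.sortedRegion :=
  Subtype.val_injective.comp (Equiv.injective _)

lemma monotone_reach_sortedRegion : Monotone fun u => C.reach (C.sortedRegion u) :=
  C.posRegions.monotone_sortedEquiv C.reach

lemma sum_sortedRegion (f : Fin n → ℝ) : ∑ u, f (C.sortedRegion u) = ∑ i ∈ C.posRegions, f i :=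
  ((C.posRegions.sortedEquiv C.reach).sum_comp fun i => f i).trans (sum_coe_sort _ _)

noncomputable def posStack : Config n #C.posRegions :=
  stack (fun u => C.posMass (C.sortedRegion u)) (fun u => (mem_filter.1 (C.sortedRegion_mem u)).2)
    C.sortedRegion

@[simp] lemma posStack_lab : C.posStack.lab = C.sortedRegion := rfl

lemma posStack_lo_nonneg (u : Fin #C.posRegions) : 0 ≤ C.posStack.lo u := stackLo_nonneg u

lemma posStack_hi_pos (u : Fin #C.posRegions) : 0 < C.posStack.hi u :=
  (C.posStack_lo_nonneg u).trans_lt (C.posStack.nondeg u)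

lemma mass_posStack (i : Fin n) : C.posStack.mass i = C.posMass i := by
  rw [posStack, mass_stack, sum_filter,
    C.sum_sortedRegion fun j => if j = i then C.posMass j else 0, sum_ite_eq']
  split_ifs with h
  · rfl
  · exact (le_antisymm (not_lt.1 fun hpos => h (mem_filter.2 ⟨mem_univ _, hpos⟩))
      (C.posMass_nonneg i)).symm

lemma posStack_hi_le_reach (u : Fin #C.posRegions) :
    C.posStack.hi u ≤ C.reach (C.sortedRegion u) := by
  refine stackHi_le (C.reach_nonneg _) ?_
  rw [← sum_image C.sortedRegion_injective.injOn]
  refine C.sum_posMass_le _ fun i hi => ?_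
  obtain ⟨v, hv, rfl⟩ := mem_image.1 hi
  exact C.monotone_reach_sortedRegion (mem_Iic.1 hv)

lemma perim_posStack_le : C.posStack.perim ≤ ∑ i ∈ C.posRegions, C.reach i :=
  (perim_stack_le _ _ _).trans <|
    (sum_le_sum fun u _ => C.posStack_hi_le_reach u).trans_eq (C.sum_sortedRegion _)

lemma insert_zero_carrier_posStack :
    insert 0 C.posStack.carrier = Set.Icc 0 √(2 * ∑ i ∈ C.posRegions, C.posMass i) := by
  rw [posStack, insert_zero_carrier_stack, C.sum_sortedRegion]

noncomputable def condense : Config n (#C.neg.posRegions + #C.posRegions) :=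
  C.neg.posStack.neg.append C.posStack fun u v =>
    show C.neg.posStack.neg.hi u ≤ C.posStack.lo v from
      (neg_nonpos.2 (C.neg.posStack_lo_nonneg u)).trans (C.posStack_lo_nonneg v)

lemma mass_condense (i : Fin n) : C.condense.mass i = C.mass i := by
  rw [condense, mass_append, mass_neg, mass_posStack, mass_posStack,
    mass_eq_posMass_add_posMass_neg, add_comm]

lemma perim_condense_le : C.condense.perim ≤ C.perim :=
  calc C.condense.perim ≤ C.neg.posStack.neg.perim + C.posStack.perim := perim_append_le _ _ _
    _ = C.neg.posStack.perim + C.posStack.perim := by rw [perim_neg]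
    _ ≤ ∑ i ∈ C.neg.posRegions, C.neg.reach i + ∑ i ∈ C.posRegions, C.reach i :=
        add_le_add C.neg.perim_posStack_le C.perim_posStack_le
    _ ≤ ∑ x ∈ C.neg.endpointSet, max x 0 + ∑ x ∈ C.endpointSet, max x 0 :=
        add_le_add C.neg.sum_reach_le C.sum_reach_le
    _ = C.perim := by rw [perim_eq_sum_max_add_sum_max_neg, add_comm]

lemma zero_mem_carrier_condense (hk : 0 < k) : 0 ∈ C.condense.carrier := by
  rw [condense, carrier_append, carrier_neg, Set.mem_union, Set.mem_neg, neg_zero]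
  set j : Fin k := ⟨0, hk⟩
  rcases lt_or_ge 0 (C.hi j) with h | h
  · exact Or.inr (zero_mem_carrier_stack _ _ _ (card_pos.2 (C.posRegions_nonempty_of_hi_pos h)))
  · have hneg : 0 < C.neg.hi j := neg_pos.2 ((C.nondeg j).trans_le h)
    exact Or.inl
      (zero_mem_carrier_stack _ _ _ (card_pos.2 (C.neg.posRegions_nonempty_of_hi_pos hneg)))

lemma carrier_condense (hk : 0 < k) :
    C.condense.carrier = Set.Icc (-√(2 * ∑ i ∈ C.neg.posRegions, C.neg.posMass i))
      √(2 * ∑ i ∈ C.posRegions, C.posMass i) := by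
  have hneg : insert 0 (-C.neg.posStack.carrier) = -insert 0 C.neg.posStack.carrier := by
    rw [Set.neg_insert, neg_zero]
  rw [← Set.insert_eq_of_mem (C.zero_mem_carrier_condense hk), condense, carrier_append,
    carrier_neg, Set.insert_union_distrib, hneg, insert_zero_carrier_posStack,
    insert_zero_carrier_posStack, Set.neg_Icc, neg_zero]
  exact Set.Icc_union_Icc_eq_Icc (neg_nonpos.2 (Real.sqrt_nonneg _)) (Real.sqrt_nonneg _)

lemma condense_condensed (hk : 0 < k) : C.condense.Condensed := by
  refine ⟨⟨_, _, neg_nonpos.2 (Real.sqrt_nonneg _), Real.sqrt_nonneg _, C.carrier_condense hk⟩,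
    fun i => ⟨?_, ?_⟩⟩ <;>
    rw [Fin.card_filter_univ_add] <;>
    simp only [condense, append_lab_castAdd, append_hi_castAdd, append_lo_castAdd,
      append_lab_natAdd, append_hi_natAdd, append_lo_natAdd, neg_lab, neg_hi, neg_lo, posStack_lab]
  · rw [card_eq_zero.2 (filter_eq_empty_iff.2 fun v _ h => (C.posStack_hi_pos v).not_ge h.2),
      add_zero]
    exact C.neg.sortedRegion_injective.card_filter_le_one fun _ h => h.1
  · rw [card_eq_zero.2 (filter_eq_empty_iff.2 fun u _ h =>
      (neg_neg_of_pos (C.neg.posStack_hi_pos u)).not_ge h.2), zero_add]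
    exact C.sortedRegion_injective.card_filter_le_one fun _ h => h.1

lemma card_filter_lab_condense_le_two (i : Fin n) : #{j | C.condense.lab j = i} ≤ 2 := by
  rw [Fin.card_filter_univ_add]
  simp only [condense, append_lab_castAdd, append_lab_natAdd, neg_lab, posStack_lab]
  exact add_le_add (C.neg.sortedRegion_injective.card_filter_le_one fun _ h => h)
    (C.sortedRegion_injective.card_filter_le_one fun _ h => h)

end Condense

end Config

/-- Every (nonempty) configuration of `n` regions on `ℝ` with density `|x|` can be
replaced by a condensed configuration with the same list of weighted masses, at most
`2n` intervals, each region consisting of at most `2` intervals, `0` in the union of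
its intervals, and total weighted perimeter at most that of the original. -/
theorem condense_to_origin (n k : ℕ) (hk : 0 < k) (C : Config n k) :
    ∃ (k' : ℕ) (C' : Config n k'),
      k' ≤ 2 * n ∧ C'.Condensed ∧
      (∀ i, C'.mass i = C.mass i) ∧
      C'.perim ≤ C.perim ∧
      (∀ i : Fin n, (univ.filter (fun j => C'.lab j = i)).card ≤ 2) ∧
      (0 : ℝ) ∈ ⋃ j, Set.Icc (C'.lo j) (C'.hi j) := by
  refine ⟨_, C.condense, ?_, C.condense_condensed hk, C.mass_condense, C.perim_condense_le,
    C.card_filter_lab_condense_le_two, C.zero_mem_carrier_condense hk⟩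
  simpa [two_mul] using add_le_add (card_le_univ C.neg.posRegions) (card_le_univ C.posRegions)
end

section
/- (Single bubble with density |x|.) Let M > 0. Every configuration of 1 region on ℝ with density |x| whose region has weighted mass M has total weighted perimeter at least √(2M). Moreover, the configuration consisting of the single interval [0, √(2M)] has weighted mass M and total weighted perimeter exactly √(2M). -/
open MeasureTheory Finset

lemma hasDerivAt_mulAbs (x : ℝ) : HasDerivAt (fun y : ℝ => y * |y| / 2) |x| x := by
  rcases lt_trichotomy x 0 with hx | hx | hx
  · have h : HasDerivAt (fun y : ℝ => -(y * y) / 2) |x| x := by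
      have h0 : |x| = -(1 * id x + id x * 1) / 2 := by simp [abs_of_neg hx]
      rw [h0]
      exact (((hasDerivAt_id x).mul (hasDerivAt_id x)).neg.div_const 2)
    refine h.congr_of_eventuallyEq ?_
    filter_upwards [Iio_mem_nhds hx] with y (hy : y < 0)
    rw [abs_of_neg hy]; ring
  · subst hx
    rw [hasDerivAt_iff_tendsto_slope]
    have hs : ∀ y : ℝ, y ≠ 0 → slope (fun y : ℝ => y * |y| / 2) 0 y = |y| / 2 := by
      intro y hy
      rw [slope_def_field]
      field_simp
      ring
    rw [abs_zero]
    have h2 : Filter.Tendsto (fun y : ℝ => |y| / 2) (nhdsWithin 0 {(0:ℝ)}ᶜ) (nhds 0) := by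
      have := (continuous_abs.div_const 2).tendsto (0:ℝ)
      simpa using this.mono_left nhdsWithin_le_nhds
    refine h2.congr' ?_
    filter_upwards [self_mem_nhdsWithin] with y hy
    exact (hs y hy).symm
  · have h : HasDerivAt (fun y : ℝ => y * y / 2) |x| x := by
      have h0 : |x| = (1 * id x + id x * 1) / 2 := by simp [abs_of_pos hx]
      rw [h0]
      exact (((hasDerivAt_id x).mul (hasDerivAt_id x)).div_const 2)
    refine h.congr_of_eventuallyEq ?_
    filter_upwards [Ioi_mem_nhds hx] with y (hy : 0 < y)
    rw [abs_of_pos hy]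

lemma integral_abs_eq (a b : ℝ) : ∫ x in a..b, |x| = b * |b| / 2 - a * |a| / 2 :=
  intervalIntegral.integral_eq_sub_of_hasDerivAt (fun x _ => hasDerivAt_mulAbs x)
    (continuous_abs.intervalIntegrable a b)


lemma pt_ineq (a b : ℝ) (hab : a < b) :
    b * |b| - a * |a| ≤ (if 0 < b then b ^ 2 else 0) + (if a < 0 then a ^ 2 else 0) := by
  rcases le_or_gt b 0 with hb | hb
  · have ha : a < 0 := lt_of_lt_of_le hab hb
    rw [if_neg (not_lt.mpr hb), if_pos ha, abs_of_nonpos hb, abs_of_neg ha]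
    nlinarith
  · rw [if_pos hb, abs_of_pos hb]
    rcases lt_or_ge a 0 with ha | ha
    · rw [if_pos ha, abs_of_neg ha]; nlinarith
    · rw [if_neg (not_lt.mpr ha), abs_of_nonneg ha]; nlinarith

/-- Single bubble with density `|x|`: every configuration of one region of weighted
mass `M > 0` has total weighted perimeter at least `√(2M)`, and the single interval
`[0, √(2M)]` has weighted mass `M` and total weighted perimeter exactly `√(2M)`. -/
theorem single_bubble (M : ℝ) (hM : 0 < M) :
    (∀ (k : ℕ) (C : Config 1 k), C.mass 0 = M → Real.sqrt (2 * M) ≤ C.perim) ∧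
    (∃ C : Config 1 1,
      C.lo 0 = 0 ∧ C.hi 0 = Real.sqrt (2 * M) ∧
      C.mass 0 = M ∧ C.perim = Real.sqrt (2 * M)) := by
  constructor
  · intro k C hC
    have hlo_inj : Function.Injective C.lo := by
      intro i j hij
      by_contra hne
      have hdisj := C.disj i j hne
      have h1 : C.lo i < min (C.hi i) (C.hi j) := lt_min (C.nondeg i) (hij ▸ C.nondeg j)
      set m := (C.lo i + min (C.hi i) (C.hi j)) / 2 with hm
      have hm1 : C.lo i < m := by rw [hm]; linarith
      have hm2 : m < min (C.hi i) (C.hi j) := by rw [hm]; linarith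
      have : m ∈ Set.Ioo (C.lo i) (C.hi i) ∩ Set.Ioo (C.lo j) (C.hi j) :=
        ⟨⟨hm1, lt_of_lt_of_le hm2 (min_le_left _ _)⟩,
         ⟨hij ▸ hm1, lt_of_lt_of_le hm2 (min_le_right _ _)⟩⟩
      rw [hdisj] at this
      exact this
    have hhi_inj : Function.Injective C.hi := by
      intro i j hij
      by_contra hne
      have hdisj := C.disj i j hne
      have h1 : max (C.lo i) (C.lo j) < C.hi i := max_lt (C.nondeg i) (hij ▸ C.nondeg j)
      set m := (max (C.lo i) (C.lo j) + C.hi i) / 2 with hm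
      have hm1 : max (C.lo i) (C.lo j) < m := by rw [hm]; linarith
      have hm2 : m < C.hi i := by rw [hm]; linarith
      have : m ∈ Set.Ioo (C.lo i) (C.hi i) ∩ Set.Ioo (C.lo j) (C.hi j) :=
        ⟨⟨lt_of_le_of_lt (le_max_left _ _) hm1, hm2⟩,
         ⟨lt_of_le_of_lt (le_max_right _ _) hm1, hij ▸ hm2⟩⟩
      rw [hdisj] at this
      exact this
    have hPnonneg : 0 ≤ C.perim := Finset.sum_nonneg fun x _ => abs_nonneg x
    have hmass : M = ∑ j : Fin k, (C.hi j * |C.hi j| / 2 - C.lo j * |C.lo j| / 2) := by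
      rw [← hC, Config.mass, Finset.filter_true_of_mem (fun j _ => Subsingleton.elim _ _)]
      exact Finset.sum_congr rfl fun j _ => integral_abs_eq _ _
    have key : 2 * M ≤ C.perim ^ 2 := by
      have h1 : 2 * M ≤ ∑ j : Fin k,
          ((if 0 < C.hi j then (C.hi j) ^ 2 else 0) + (if C.lo j < 0 then (C.lo j) ^ 2 else 0)) := by
        rw [hmass, Finset.mul_sum]
        refine Finset.sum_le_sum fun j _ => ?_
        have := pt_ineq (C.lo j) (C.hi j) (C.nondeg j)
        linarith
      have h2 : (∑ j : Fin k, if 0 < C.hi j then (C.hi j) ^ 2 else 0)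
          ≤ ∑ x ∈ C.endpointSet, (if 0 < x then x ^ 2 else 0) := by
        rw [show (∑ j : Fin k, if 0 < C.hi j then (C.hi j) ^ 2 else 0)
            = ∑ x ∈ image C.hi univ, (if 0 < x then x ^ 2 else 0) from
          (Finset.sum_image (g := C.hi) (f := fun x : ℝ => if 0 < x then x ^ 2 else 0)
            hhi_inj.injOn).symm]
        refine Finset.sum_le_sum_of_subset_of_nonneg (Finset.subset_union_right) ?_
        intro x _ _
        split <;> positivity
      have h3 : (∑ j : Fin k, if C.lo j < 0 then (C.lo j) ^ 2 else 0)
          ≤ ∑ x ∈ C.endpointSet, (if x < 0 then x ^ 2 else 0) := by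
        rw [show (∑ j : Fin k, if C.lo j < 0 then (C.lo j) ^ 2 else 0)
            = ∑ x ∈ image C.lo univ, (if x < 0 then x ^ 2 else 0) from
          (Finset.sum_image (g := C.lo) (f := fun x : ℝ => if x < 0 then x ^ 2 else 0)
            hlo_inj.injOn).symm]
        refine Finset.sum_le_sum_of_subset_of_nonneg (Finset.subset_union_left) ?_
        intro x _ _
        split <;> positivity
      have h4 : ∑ x ∈ C.endpointSet, ((if 0 < x then x ^ 2 else 0) + (if x < 0 then x ^ 2 else 0))
          ≤ ∑ x ∈ C.endpointSet, |x| * C.perim := by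
        refine Finset.sum_le_sum fun x hx => ?_
        have hxle : |x| ≤ C.perim :=
          Finset.single_le_sum (fun y _ => abs_nonneg y) hx
        have : (if 0 < x then x ^ 2 else 0) + (if x < 0 then x ^ 2 else 0) ≤ x ^ 2 := by
          rcases lt_trichotomy x 0 with h | h | h
          · rw [if_neg (by linarith), if_pos h]; simp
          · simp [h]
          · rw [if_pos h, if_neg (by linarith)]; simp
        calc (if 0 < x then x ^ 2 else 0) + (if x < 0 then x ^ 2 else 0) ≤ x ^ 2 := this
          _ = |x| * |x| := by rw [← sq_abs]; ring
          _ ≤ |x| * C.perim := mul_le_mul_of_nonneg_left hxle (abs_nonneg x)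
      have h5 : ∑ x ∈ C.endpointSet, |x| * C.perim = C.perim ^ 2 := by
        rw [← Finset.sum_mul, Config.perim]; ring
      calc 2 * M ≤ _ := h1
        _ = (∑ j : Fin k, if 0 < C.hi j then (C.hi j) ^ 2 else 0)
            + (∑ j : Fin k, if C.lo j < 0 then (C.lo j) ^ 2 else 0) := Finset.sum_add_distrib
        _ ≤ (∑ x ∈ C.endpointSet, (if 0 < x then x ^ 2 else 0))
            + (∑ x ∈ C.endpointSet, (if x < 0 then x ^ 2 else 0)) := add_le_add h2 h3
        _ = ∑ x ∈ C.endpointSet, ((if 0 < x then x ^ 2 else 0) + (if x < 0 then x ^ 2 else 0)) :=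
            Finset.sum_add_distrib.symm
        _ ≤ ∑ x ∈ C.endpointSet, |x| * C.perim := h4
        _ = C.perim ^ 2 := h5
    calc Real.sqrt (2 * M) ≤ Real.sqrt (C.perim ^ 2) := Real.sqrt_le_sqrt key
      _ = C.perim := Real.sqrt_sq hPnonneg
  · set s := Real.sqrt (2 * M) with hsdef
    have h2M : (0:ℝ) ≤ 2 * M := by linarith
    have hs : 0 < s := Real.sqrt_pos.mpr (by linarith)
    have hs2 : s ^ 2 = 2 * M := Real.sq_sqrt h2M
    refine ⟨⟨fun _ => 0, fun _ => s, fun _ => 0, fun _ => hs,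
      fun i j hij => absurd (Subsingleton.elim i j) hij⟩, rfl, rfl, ?_, ?_⟩
    · rw [Config.mass, Finset.filter_true_of_mem (fun j _ => Subsingleton.elim _ _),
        Fin.sum_univ_one, integral_abs_eq, abs_of_pos hs, abs_zero]
      nlinarith
    · rw [Config.perim, Config.endpointSet]
      have : (image (fun _ : Fin 1 => (0:ℝ)) univ ∪ image (fun _ : Fin 1 => s) univ)
          = {0, s} := by
        simp [Finset.image_const]
      rw [this, Finset.sum_pair hs.ne]
      simp [abs_of_pos hs]
end

section
/- (Double bubble with density |x|.) Let M₁, M₂ > 0. Every configuration of 2 regions on ℝ with density |x| whose regions have weighted masses M₁ and M₂ has total weighted perimeter at least √(2M₁) + √(2M₂). Moreover, the configuration consisting of the intervals [−√(2M₂), 0] (region 2) and [0, √(2M₁)] (region 1) has weighted masses M₂ and M₁ and total weighted perimeter exactly √(2M₁) + √(2M₂). -/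
open MeasureTheory Finset

/-!
The intervals of one region are disjoint subintervals of `[a, b]`, where `a` is their smallest
left and `b` their largest right endpoint; so the region has mass at most
`∫_a^b |x| dx ≤ ((b⁺)² + (a⁻)²) / 2`, i.e. `√(2 · mass) ≤ b⁺ + a⁻`. Distinct intervals have
distinct right endpoints and distinct left endpoints, so summing over the regions gives
`∑ᵢ √(2 Mᵢ) ≤ ∑ x⁺ + ∑ x⁻ = ∑ |x|` over all endpoints `x`. Two intervals meeting at the origin,
where the density vanishes, attain the bound.
-/

open Function intervalIntegral

theorem integral_abs (a b : ℝ) : ∫ x in a..b, |x| = (b * |b| - a * |a|) / 2 := by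
  have from_zero : ∀ c : ℝ, ∫ x in (0 : ℝ)..c, |x| = c * |c| / 2 := by
    intro c
    rcases le_total 0 c with hc | hc
    · have h : Set.EqOn (|·|) (fun x => x) (Set.uIcc 0 c) := fun x hx =>
        abs_of_nonneg (by rw [Set.uIcc_of_le hc] at hx; exact hx.1)
      rw [integral_congr h, integral_id, abs_of_nonneg hc]
      ring
    · have h : Set.EqOn (|·|) (fun x => -x) (Set.uIcc 0 c) := fun x hx =>
        abs_of_nonpos (by rw [Set.uIcc_of_ge hc] at hx; exact hx.2)
      rw [integral_congr h, intervalIntegral.integral_neg, integral_id, abs_of_nonpos hc]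
      ring
  have hint : ∀ c d : ℝ, IntervalIntegrable (|·|) volume c d := fun c d =>
    continuous_abs.intervalIntegrable c d
  rw [← integral_add_adjacent_intervals (hint a 0) (hint 0 b), integral_symm, from_zero,
    from_zero]
  ring

theorem mul_abs_le_posPart_sq (x : ℝ) : x * |x| ≤ x⁺ ^ 2 := by
  rcases le_total 0 x with hx | hx
  · rw [abs_of_nonneg hx, posPart_eq_self.mpr hx, sq]
  · rw [posPart_eq_zero.mpr hx]
    nlinarith [abs_nonneg x]

theorem sqrt_two_mul_integral_abs_le (a b : ℝ) :
    √(2 * ∫ x in a..b, |x|) ≤ b⁺ + a⁻ := by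
  have hb := mul_abs_le_posPart_sq b
  have ha := mul_abs_le_posPart_sq (-a)
  rw [abs_neg, posPart_neg] at ha
  rw [Real.sqrt_le_left (add_nonneg (posPart_nonneg b) (negPart_nonneg a)), integral_abs]
  nlinarith [posPart_nonneg b, negPart_nonneg a]

theorem sum_integral_le_integral_of_pairwise_disjoint {ι : Type*} {s : Finset ι}
    {lo hi : ι → ℝ} {f : ℝ → ℝ} {a b : ℝ} (hab : a ≤ b) (hle : ∀ j ∈ s, lo j ≤ hi j)
    (hdisj : (s : Set ι).Pairwise (Disjoint on fun j => Set.Ioc (lo j) (hi j)))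
    (hsub : ∀ j ∈ s, a ≤ lo j ∧ hi j ≤ b)
    (hf : IntegrableOn f (Set.Ioc a b)) (hf0 : ∀ x ∈ Set.Ioc a b, 0 ≤ f x) :
    ∑ j ∈ s, ∫ x in lo j..hi j, f x ≤ ∫ x in a..b, f x := by
  have hsubset : ∀ j ∈ s, Set.Ioc (lo j) (hi j) ⊆ Set.Ioc a b := fun j hj =>
    Set.Ioc_subset_Ioc (hsub j hj).1 (hsub j hj).2
  calc ∑ j ∈ s, ∫ x in lo j..hi j, f x = ∑ j ∈ s, ∫ x in Set.Ioc (lo j) (hi j), f x :=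
        sum_congr rfl fun j hj => integral_of_le (hle j hj)
    _ = ∫ x in ⋃ j ∈ s, Set.Ioc (lo j) (hi j), f x :=
        (integral_biUnion_finset s (fun _ _ => measurableSet_Ioc) hdisj
          fun j hj => hf.mono_set (hsubset j hj)).symm
    _ ≤ ∫ x in Set.Ioc a b, f x :=
        setIntegral_mono_set hf (ae_restrict_of_forall_mem measurableSet_Ioc hf0)
          (Set.iUnion₂_subset hsubset).eventuallyLE
    _ = ∫ x in a..b, f x := (integral_of_le hab).symm

namespace Config

variable {n k : ℕ} (C : Config n k)

theorem min_hi_le_max_lo {i j : Fin k} (hij : i ≠ j) :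
    min (C.hi i) (C.hi j) ≤ max (C.lo i) (C.lo j) :=
  Set.Ioo_disjoint_Ioo.mp (Set.disjoint_iff_inter_eq_empty.mpr (C.disj i j hij))

theorem hi_injective_s7 : Injective C.hi := by
  intro i j h
  by_contra hij
  have hd := Set.Ioc_disjoint_Ioc.mpr (C.min_hi_le_max_lo hij)
  exact hd.ne_of_mem ⟨C.nondeg i, le_rfl⟩ ⟨h ▸ C.nondeg j, h.le⟩ rfl

theorem lo_injective : Injective C.lo := by
  intro i j h
  by_contra hij
  have hd := Set.Ico_disjoint_Ico.mpr (C.min_hi_le_max_lo hij)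
  exact hd.ne_of_mem ⟨le_rfl, C.nondeg i⟩ ⟨h.ge, h ▸ C.nondeg j⟩ rfl

theorem mass_le_integral_abs (i : Fin n) {a b : ℝ} (hab : a ≤ b)
    (hsub : ∀ j, C.lab j = i → a ≤ C.lo j ∧ C.hi j ≤ b) :
    C.mass i ≤ ∫ x in a..b, |x| :=
  sum_integral_le_integral_of_pairwise_disjoint hab (fun j _ => (C.nondeg j).le)
    (fun _ _ _ _ hij => Set.Ioc_disjoint_Ioc.mpr (C.min_hi_le_max_lo hij))
    (fun j hj => hsub j (mem_filter.mp hj).2) continuous_abs.integrableOn_Ioc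
    fun x _ => abs_nonneg x

theorem sqrt_two_mul_mass_le (i : Fin n) :
    √(2 * C.mass i) ≤ ∑ j ∈ univ.filter (C.lab · = i), ((C.hi j)⁺ + (C.lo j)⁻) := by
  set s := univ.filter (C.lab · = i)
  rcases s.eq_empty_or_nonempty with hs | hs
  · simp [mass, s, hs]
  obtain ⟨jL, hjL, hL⟩ := s.exists_min_image C.lo hs
  obtain ⟨jR, hjR, hR⟩ := s.exists_max_image C.hi hs
  have hmass : C.mass i ≤ ∫ x in C.lo jL..C.hi jR, |x| :=
    C.mass_le_integral_abs i ((C.nondeg jL).le.trans (hR jL hjL)) fun j hj =>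
      ⟨hL j (by simp [s, hj]), hR j (by simp [s, hj])⟩
  calc √(2 * C.mass i) ≤ √(2 * ∫ x in C.lo jL..C.hi jR, |x|) := by gcongr
    _ ≤ (C.hi jR)⁺ + (C.lo jL)⁻ := sqrt_two_mul_integral_abs_le _ _
    _ ≤ ∑ j ∈ s, ((C.hi j)⁺ + (C.lo j)⁻) := by
      rw [sum_add_distrib]
      gcongr
      · exact single_le_sum (fun j _ => posPart_nonneg (C.hi j)) hjR
      · exact single_le_sum (fun j _ => negPart_nonneg (C.lo j)) hjL

theorem perim_eq_sum_posPart_add_sum_negPart :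
    C.perim = ∑ x ∈ C.endpointSet, x⁺ + ∑ x ∈ C.endpointSet, x⁻ := by
  rw [perim, ← sum_add_distrib]
  simp only [posPart_add_negPart]

theorem sum_sqrt_two_mul_mass_le_perim : ∑ i, √(2 * C.mass i) ≤ C.perim := by
  calc ∑ i, √(2 * C.mass i)
      ≤ ∑ i, ∑ j ∈ univ.filter (C.lab · = i), ((C.hi j)⁺ + (C.lo j)⁻) :=
        sum_le_sum fun i _ => C.sqrt_two_mul_mass_le i
    _ = ∑ x ∈ image C.hi univ, x⁺ + ∑ x ∈ image C.lo univ, x⁻ := by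
        rw [sum_fiberwise, sum_add_distrib, sum_image C.hi_injective_s7.injOn,
          sum_image C.lo_injective.injOn]
    _ ≤ ∑ x ∈ C.endpointSet, x⁺ + ∑ x ∈ C.endpointSet, x⁻ := by
        gcongr
        · exact subset_union_right
        · exact subset_union_left
    _ = C.perim := C.perim_eq_sum_posPart_add_sum_negPart.symm

def standardDoubleBubble (r₁ r₂ : ℝ) (h₁ : 0 < r₁) (h₂ : 0 < r₂) : Config 2 2 where
  lo := ![0, -r₂]
  hi := ![r₁, 0]
  lab := id
  nondeg j := by fin_cases j <;> simp [h₁, h₂]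
  disj i j hij := by
    rw [← Set.disjoint_iff_inter_eq_empty, Set.Ioo_disjoint_Ioo]
    fin_cases i <;> fin_cases j <;> simp_all [h₁.le, h₂.le]

variable {r₁ r₂ : ℝ} (h₁ : 0 < r₁) (h₂ : 0 < r₂)

theorem mass_standardDoubleBubble_zero :
    (standardDoubleBubble r₁ r₂ h₁ h₂).mass 0 = r₁ ^ 2 / 2 := by
  rw [mass, sum_filter, Fin.sum_univ_two]
  simp [standardDoubleBubble, integral_abs, abs_of_pos h₁, sq]

theorem mass_standardDoubleBubble_one :
    (standardDoubleBubble r₁ r₂ h₁ h₂).mass 1 = r₂ ^ 2 / 2 := by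
  rw [mass, sum_filter, Fin.sum_univ_two]
  simp [standardDoubleBubble, integral_abs, abs_of_pos h₂, sq]

theorem perim_standardDoubleBubble : (standardDoubleBubble r₁ r₂ h₁ h₂).perim = r₁ + r₂ := by
  have hE : (standardDoubleBubble r₁ r₂ h₁ h₂).endpointSet = {-r₂, 0, r₁} := by
    ext x
    simp only [endpointSet, standardDoubleBubble, mem_union, mem_image, mem_univ, true_and,
      Fin.exists_fin_two, Fin.isValue, Matrix.cons_val_zero, Matrix.cons_val_one,
      Matrix.cons_val_fin_one, mem_insert, mem_singleton]
    tauto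
  have h_neg : -r₂ ∉ ({0, r₁} : Finset ℝ) := by
    simp only [mem_insert, neg_eq_zero, h₂.ne', mem_singleton, false_or]
    linarith
  rw [perim, hE, sum_insert h_neg, sum_insert (by simp [h₁.ne]), sum_singleton, abs_neg,
    abs_of_pos h₁, abs_of_pos h₂, abs_zero]
  ring

end Config

/-- Double bubble with density `|x|`: every configuration of two regions of weighted
masses `M₁, M₂ > 0` has total weighted perimeter at least `√(2M₁) + √(2M₂)`, and the
configuration of the intervals `[-√(2M₂), 0]` (region `1`) and `[0, √(2M₁)]`
(region `0`) achieves this with the correct masses. -/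
theorem double_bubble (M₁ M₂ : ℝ) (h₁ : 0 < M₁) (h₂ : 0 < M₂) :
    (∀ (k : ℕ) (C : Config 2 k),
      (∃ σ : Equiv.Perm (Fin 2), ∀ i, C.mass (σ i) = ![M₁, M₂] i) →
      Real.sqrt (2 * M₁) + Real.sqrt (2 * M₂) ≤ C.perim) ∧
    (∃ C : Config 2 2,
      C.lo 1 = -Real.sqrt (2 * M₂) ∧ C.hi 1 = 0 ∧ C.lab 1 = 1 ∧
      C.lo 0 = 0 ∧ C.hi 0 = Real.sqrt (2 * M₁) ∧ C.lab 0 = 0 ∧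
      C.mass 0 = M₁ ∧ C.mass 1 = M₂ ∧
      C.perim = Real.sqrt (2 * M₁) + Real.sqrt (2 * M₂)) := by
  refine ⟨fun k C ⟨σ, hσ⟩ => ?_, ?_⟩
  · have h := C.sum_sqrt_two_mul_mass_le_perim
    rw [← Equiv.sum_comp σ, Fin.sum_univ_two, hσ 0, hσ 1] at h
    simpa using h
  · have hr₁ : 0 < √(2 * M₁) := Real.sqrt_pos.mpr (by linarith)
    have hr₂ : 0 < √(2 * M₂) := Real.sqrt_pos.mpr (by linarith)
    refine ⟨Config.standardDoubleBubble _ _ hr₁ hr₂, rfl, rfl, rfl, rfl, rfl, rfl, ?_, ?_,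
      Config.perim_standardDoubleBubble hr₁ hr₂⟩
    · rw [Config.mass_standardDoubleBubble_zero, Real.sq_sqrt (by linarith)]
      ring
    · rw [Config.mass_standardDoubleBubble_one, Real.sq_sqrt (by linarith)]
      ring
end

section
/- (Simultaneous Mass Siphoning.) Let C be a condensed configuration of n regions on ℝ with density |x|, and suppose there are two regions A and B, each consisting of exactly two intervals A⁻, A⁺ and B⁻, B⁺, which appear in the alternating left-to-right order A⁻, B⁻, A⁺, B⁺ (i.e. sup A⁻ ≤ inf B⁻, sup B⁻ ≤ inf A⁺, and sup A⁺ ≤ inf B⁺). Then there exists a configuration of n regions with the same list of weighted masses whose total weighted perimeter is strictly smaller than that of C. -/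
open MeasureTheory Finset

/-!
Work in the mass coordinate `massCoord x = x * |x| / 2`, a primitive of the density: masses are
differences of mass coordinates, and `|x|` is an increasing function of `|massCoord x|`. Move every
endpoint lying between `A⁻` and `B⁻` to the right by `δ` in mass coordinates, and every endpoint
lying between `A⁺` and `B⁺` to the left by `δ`. This transfers mass `δ` from `B⁻` to `A⁻` and from
`A⁺` to `B⁺` and leaves every other interval's mass unchanged, so all region masses are kept.
Condensedness puts the first gap left of `0` and the second right of `0`, so for small `δ` every
moved endpoint gets closer to `0`, and `inf B⁻` strictly so.
-/

noncomputable def massCoord (x : ℝ) : ℝ := x * |x| / 2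

theorem hasDerivAt_massCoord (x : ℝ) : HasDerivAt massCoord |x| x := by
  rcases eq_or_ne x 0 with rfl | hx
  · rw [hasDerivAt_iff_isLittleO_nhds_zero]
    refine Asymptotics.IsBigO.trans_isLittleO ?_ (Asymptotics.isLittleO_pow_id one_lt_two)
    refine Asymptotics.IsBigO.of_bound 1 (Filter.Eventually.of_forall fun h => ?_)
    simp [massCoord]
    nlinarith [sq_nonneg h]
  · refine (((hasDerivAt_id x).mul (hasDerivAt_abs hx)).div_const 2).congr_deriv ?_
    rcases hx.lt_or_gt with h | h
    · simp [h, abs_of_neg h]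
    · simp [h, abs_of_pos h]

theorem integral_abs_eq_massCoord_sub (a b : ℝ) :
    ∫ x in a..b, |x| = massCoord b - massCoord a :=
  intervalIntegral.integral_eq_sub_of_hasDerivAt (fun x _ => hasDerivAt_massCoord x)
    (continuous_abs.intervalIntegrable a b)

theorem strictMono_massCoord : StrictMono massCoord := by
  intro x y h
  simp only [massCoord]
  rcases le_total 0 x with hx | hx <;> rcases le_total 0 y with hy | hy <;>
    simp only [abs_of_nonneg, abs_of_nonpos, hx, hy] <;>
    nlinarith [sq_nonneg (x + y), mul_pos (sub_pos.2 h) (sub_pos.2 h)]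

theorem surjective_massCoord : Function.Surjective massCoord := by
  intro y
  rcases le_total 0 y with hy | hy
  · refine ⟨Real.sqrt (2 * y), ?_⟩
    rw [massCoord, abs_of_nonneg (Real.sqrt_nonneg _), Real.mul_self_sqrt (by linarith)]
    ring
  · refine ⟨-Real.sqrt (-2 * y), ?_⟩
    rw [massCoord, abs_neg, abs_of_nonneg (Real.sqrt_nonneg _), neg_mul,
      Real.mul_self_sqrt (by linarith)]
    ring

noncomputable def massCoordIso : ℝ ≃o ℝ :=
  StrictMono.orderIsoOfSurjective massCoord strictMono_massCoord surjective_massCoord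

theorem abs_massCoord (x : ℝ) : |massCoord x| = x ^ 2 / 2 := by
  rw [massCoord, abs_div, abs_mul, abs_abs, abs_two, ← sq, sq_abs]

theorem abs_massCoord_le_abs_massCoord {x y : ℝ} :
    |massCoord x| ≤ |massCoord y| ↔ |x| ≤ |y| := by
  rw [abs_massCoord, abs_massCoord, div_le_div_iff_of_pos_right two_pos, sq_le_sq]

theorem abs_massCoord_lt_abs_massCoord {x y : ℝ} :
    |massCoord x| < |massCoord y| ↔ |x| < |y| := by
  rw [abs_massCoord, abs_massCoord, div_lt_div_iff_of_pos_right two_pos, sq_lt_sq]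


namespace Config

variable {n k : ℕ} (C : Config n k)

theorem hi_le_lo_or_hi_le_lo {i j : Fin k} (h : i ≠ j) :
    C.hi i ≤ C.lo j ∨ C.hi j ≤ C.lo i := by
  by_contra! hc
  have hmem : max (C.lo i) (C.lo j) + (min (C.hi i) (C.hi j) - max (C.lo i) (C.lo j)) / 2 ∈
      Set.Ioo (C.lo i) (C.hi i) ∩ Set.Ioo (C.lo j) (C.hi j) := by
    have := C.nondeg i
    have := C.nondeg j
    simp only [Set.mem_inter_iff, Set.mem_Ioo]
    refine ⟨⟨?_, ?_⟩, ?_, ?_⟩ <;> cases max_cases (C.lo i) (C.lo j) <;>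
      cases min_cases (C.hi i) (C.hi j) <;> linarith
  simp [C.disj i j h] at hmem

theorem mem_endpointSet {x : ℝ} : x ∈ C.endpointSet ↔ ∃ j, C.lo j = x ∨ C.hi j = x := by
  simp [endpointSet, exists_or]

theorem lo_mem_endpointSet (j : Fin k) : C.lo j ∈ C.endpointSet :=
  C.mem_endpointSet.2 ⟨j, .inl rfl⟩

theorem hi_mem_endpointSet (j : Fin k) : C.hi j ∈ C.endpointSet :=
  C.mem_endpointSet.2 ⟨j, .inr rfl⟩

theorem le_lo_or_hi_le_of_mem_endpointSet {x : ℝ} (hx : x ∈ C.endpointSet) (j : Fin k) :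
    x ≤ C.lo j ∨ C.hi j ≤ x := by
  obtain ⟨i, rfl | rfl⟩ := C.mem_endpointSet.1 hx <;> obtain rfl | hij := eq_or_ne i j
  · exact .inl le_rfl
  · exact (C.hi_le_lo_or_hi_le_lo hij).imp (C.nondeg i).le.trans id
  · exact .inr le_rfl
  · exact (C.hi_le_lo_or_hi_le_lo hij).imp id fun h => h.trans (C.nondeg i).le

theorem lo_mem_Icc_iff_hi_mem_Icc {p q j : Fin k} (hjp : j ≠ p) (hjq : j ≠ q)
    (hpq : C.hi p ≤ C.lo q) :
    C.lo j ∈ Set.Icc (C.hi p) (C.lo q) ↔ C.hi j ∈ Set.Icc (C.hi p) (C.lo q) := by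
  have := C.nondeg j
  have := C.nondeg p
  have := C.nondeg q
  simp only [Set.mem_Icc]
  rcases C.hi_le_lo_or_hi_le_lo hjp with hj | hj <;>
    rcases C.hi_le_lo_or_hi_le_lo hjq with hj' | hj' <;>
    constructor <;> rintro ⟨h₁, h₂⟩ <;> constructor <;> linarith

def map (φ : ℝ → ℝ) (hφ : StrictMonoOn φ C.endpointSet) : Config n k where
  lo := φ ∘ C.lo
  hi := φ ∘ C.hi
  lab := C.lab
  nondeg j := hφ (C.lo_mem_endpointSet j) (C.hi_mem_endpointSet j) (C.nondeg j)
  disj i j hij := by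
    rcases C.hi_le_lo_or_hi_le_lo hij with h | h
    · have := hφ.monotoneOn (C.hi_mem_endpointSet i) (C.lo_mem_endpointSet j) h
      exact Set.eq_empty_of_forall_notMem fun x hx => by
        simp only [Function.comp, Set.mem_inter_iff, Set.mem_Ioo] at hx; linarith
    · have := hφ.monotoneOn (C.hi_mem_endpointSet j) (C.lo_mem_endpointSet i) h
      exact Set.eq_empty_of_forall_notMem fun x hx => by
        simp only [Function.comp, Set.mem_inter_iff, Set.mem_Ioo] at hx; linarith

theorem mass_eq_sum_massCoord (i : Fin n) :
    C.mass i = ∑ j ∈ univ.filter (C.lab · = i), (massCoord (C.hi j) - massCoord (C.lo j)) := by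
  simp only [mass, integral_abs_eq_massCoord_sub]

theorem mass_map (φ : ℝ → ℝ) (hφ : StrictMonoOn φ C.endpointSet) (i : Fin n) :
    (C.map φ hφ).mass i =
      ∑ j ∈ univ.filter (C.lab · = i), (massCoord (φ (C.hi j)) - massCoord (φ (C.lo j))) :=
  (C.map φ hφ).mass_eq_sum_massCoord i

theorem perim_map (φ : ℝ → ℝ) (hφ : StrictMonoOn φ C.endpointSet) :
    (C.map φ hφ).perim = ∑ x ∈ C.endpointSet, |φ x| := by
  have : (C.map φ hφ).endpointSet = C.endpointSet.image φ := by
    simp only [endpointSet, map, image_union, image_image]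
  rw [perim, this, sum_image hφ.injOn]

theorem exists_perim_lt_of_massCoord_shift (s : ℝ → ℝ)
    (hmono : StrictMonoOn (fun x => massCoord x + s x) C.endpointSet)
    (hmass : ∀ i, ∑ j ∈ univ.filter (C.lab · = i), (s (C.hi j) - s (C.lo j)) = 0)
    (hle : ∀ x ∈ C.endpointSet, |massCoord x + s x| ≤ |massCoord x|)
    (hlt : ∃ x ∈ C.endpointSet, |massCoord x + s x| < |massCoord x|) :
    ∃ C' : Config n k, (∀ i, C'.mass i = C.mass i) ∧ C'.perim < C.perim := by
  set φ := fun x => massCoordIso.symm (massCoord x + s x)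
  have hφ : StrictMonoOn φ C.endpointSet := massCoordIso.symm.strictMono.comp_strictMonoOn hmono
  have hmassCoord_φ (x : ℝ) : massCoord (φ x) = massCoord x + s x :=
    massCoordIso.apply_symm_apply _
  refine ⟨C.map φ hφ, fun i => ?_, ?_⟩
  · rw [mass_map, mass_eq_sum_massCoord, ← sub_eq_zero, ← sum_sub_distrib, ← hmass i]
    simp only [hmassCoord_φ]
    exact sum_congr rfl fun j _ => by ring
  · rw [perim_map, perim]
    refine sum_lt_sum (fun x hx => ?_) (hlt.imp fun x => And.imp_right fun h => ?_)
    · rw [← abs_massCoord_le_abs_massCoord, hmassCoord_φ]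
      exact hle x hx
    · rw [← abs_massCoord_lt_abs_massCoord, hmassCoord_φ]
      exact h

variable {C}

theorem Condensed.eq_of_lab_eq_of_hi_nonpos (hC : C.Condensed) {i j : Fin k}
    (hlab : C.lab i = C.lab j) (hi : C.hi i ≤ 0) (hj : C.hi j ≤ 0) : i = j :=
  card_le_one.1 (hC.2 (C.lab j)).1 i (by simp [hlab, hi]) j (by simp [hj])

theorem Condensed.eq_of_lab_eq_of_lo_nonneg (hC : C.Condensed) {i j : Fin k}
    (hlab : C.lab i = C.lab j) (hi : 0 ≤ C.lo i) (hj : 0 ≤ C.lo j) : i = j :=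
  card_le_one.1 (hC.2 (C.lab j)).2 i (by simp [hlab, hi]) j (by simp [hj])

theorem filter_lab_eq_pair {i : Fin n} {p q : Fin k} (hp : C.lab p = i) (hq : C.lab q = i)
    (honly : ∀ j, C.lab j = i → j = p ∨ j = q) :
    univ.filter (C.lab · = i) = {p, q} := by
  ext j
  simp only [mem_filter, mem_univ, true_and, mem_insert, mem_singleton]
  exact ⟨honly j, by rintro (rfl | rfl) <;> assumption⟩

variable (C) in
noncomputable def siphonShift (δ : ℝ) (am bm ap bp : Fin k) (x : ℝ) : ℝ :=
  (Set.Icc (C.hi am) (C.lo bm)).indicator (fun _ => δ) x -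
    (Set.Icc (C.hi ap) (C.lo bp)).indicator (fun _ => δ) x

variable {δ : ℝ} {am bm ap bp : Fin k} {x : ℝ}

theorem siphonShift_of_mem_left (hsep : C.lo bm < C.hi ap)
    (hx : x ∈ Set.Icc (C.hi am) (C.lo bm)) : C.siphonShift δ am bm ap bp x = δ := by
  rw [siphonShift, Set.indicator_of_mem hx,
    Set.indicator_of_notMem fun h => by linarith [hx.2, h.1], sub_zero]

theorem siphonShift_of_mem_right (hsep : C.lo bm < C.hi ap)
    (hx : x ∈ Set.Icc (C.hi ap) (C.lo bp)) : C.siphonShift δ am bm ap bp x = -δ := by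
  rw [siphonShift, Set.indicator_of_mem hx,
    Set.indicator_of_notMem fun h => by linarith [hx.1, h.2], zero_sub]

theorem siphonShift_of_notMem (hl : x ∉ Set.Icc (C.hi am) (C.lo bm))
    (hr : x ∉ Set.Icc (C.hi ap) (C.lo bp)) : C.siphonShift δ am bm ap bp x = 0 := by
  rw [siphonShift, Set.indicator_of_notMem hl, Set.indicator_of_notMem hr, sub_zero]

theorem siphonShift_mem_Icc (hδ : 0 ≤ δ) (x : ℝ) :
    C.siphonShift δ am bm ap bp x ∈ Set.Icc (-δ) δ := by
  simp only [siphonShift, Set.indicator_apply, Set.mem_Icc]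
  split_ifs <;> constructor <;> linarith

theorem strictMonoOn_massCoord_add_siphonShift (hδ : 0 ≤ δ)
    (hbm : 2 * δ < massCoord (C.hi bm) - massCoord (C.lo bm))
    (hap : 2 * δ < massCoord (C.hi ap) - massCoord (C.lo ap)) :
    StrictMonoOn (fun x => massCoord x + C.siphonShift δ am bm ap bp x) C.endpointSet := by
  intro x hx y hy hxy
  have hF := strictMono_massCoord.monotone
  have hsx := C.siphonShift_mem_Icc (am := am) (bm := bm) (ap := ap) (bp := bp) hδ x
  have hsy := C.siphonShift_mem_Icc (am := am) (bm := bm) (ap := ap) (bp := bp) hδ y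
  by_cases hl : x ∈ Set.Icc (C.hi am) (C.lo bm) ∧ y ∉ Set.Icc (C.hi am) (C.lo bm)
  · -- the shift drops by at most `2 * δ`, less than the mass of `bm`, which lies between `x`, `y`
    have hy' : C.hi bm ≤ y := (C.le_lo_or_hi_le_of_mem_endpointSet hy bm).resolve_left
      fun h => hl.2 ⟨hl.1.1.trans hxy.le, h⟩
    linarith [hF hl.1.2, hF hy', hsx.2, hsy.1]
  by_cases hr : y ∈ Set.Icc (C.hi ap) (C.lo bp) ∧ x ∉ Set.Icc (C.hi ap) (C.lo bp)
  · have hx' : x ≤ C.lo ap := (C.le_lo_or_hi_le_of_mem_endpointSet hx ap).resolve_right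
      fun h => hr.2 ⟨h, hxy.le.trans hr.1.2⟩
    linarith [hF hx', hF hr.1.1, hsx.2, hsy.1]
  have hs : C.siphonShift δ am bm ap bp x ≤ C.siphonShift δ am bm ap bp y := by
    simp only [siphonShift, Set.indicator_apply]
    split_ifs <;> simp_all
  linarith [strictMono_massCoord hxy]

theorem siphonShift_hi_eq_lo {j : Fin k} (hjam : j ≠ am) (hjbm : j ≠ bm) (hjap : j ≠ ap)
    (hjbp : j ≠ bp) (h1 : C.hi am ≤ C.lo bm) (h3 : C.hi ap ≤ C.lo bp) :
    C.siphonShift δ am bm ap bp (C.hi j) = C.siphonShift δ am bm ap bp (C.lo j) := by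
  simp only [siphonShift, Set.indicator_apply, C.lo_mem_Icc_iff_hi_mem_Icc hjam hjbm h1,
    C.lo_mem_Icc_iff_hi_mem_Icc hjap hjbp h3]

theorem sum_siphonShift_sub_eq_zero {A B : Fin n}
    (hlabam : C.lab am = A) (hlabap : C.lab ap = A) (hlabbm : C.lab bm = B)
    (hlabbp : C.lab bp = B) (hA : am ≠ ap) (hB : bm ≠ bp)
    (honlyA : ∀ j, C.lab j = A → j = am ∨ j = ap) (honlyB : ∀ j, C.lab j = B → j = bm ∨ j = bp)
    (h1 : C.hi am ≤ C.lo bm) (h2 : C.hi bm ≤ C.lo ap) (h3 : C.hi ap ≤ C.lo bp) (i : Fin n) :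
    ∑ j ∈ univ.filter (C.lab · = i),
      (C.siphonShift δ am bm ap bp (C.hi j) - C.siphonShift δ am bm ap bp (C.lo j)) = 0 := by
  have := C.nondeg am
  have := C.nondeg bm
  have := C.nondeg ap
  have := C.nondeg bp
  have hsep : C.lo bm < C.hi ap := by linarith
  have mem_left {x} (h : C.hi am ≤ x) (h' : x ≤ C.lo bm) := siphonShift_of_mem_left (δ := δ)
    (ap := ap) (bp := bp) hsep ⟨h, h'⟩
  have mem_right {x} (h : C.hi ap ≤ x) (h' : x ≤ C.lo bp) := siphonShift_of_mem_right (δ := δ)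
    (am := am) (bm := bm) hsep ⟨h, h'⟩
  have notMem {x} (h : x < C.hi am ∨ C.lo bm < x) (h' : x < C.hi ap ∨ C.lo bp < x) :
      C.siphonShift δ am bm ap bp x = 0 :=
    siphonShift_of_notMem (by rintro ⟨_, _⟩; rcases h with _ | _ <;> linarith)
      (by rintro ⟨_, _⟩; rcases h' with _ | _ <;> linarith)
  obtain rfl | hiA := eq_or_ne i A
  · rw [filter_lab_eq_pair hlabam hlabap honlyA, sum_pair hA, mem_left le_rfl h1,
      mem_right le_rfl h3, notMem (.inl (C.nondeg am)) (.inl (by linarith)),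
      notMem (.inr (by linarith)) (.inl (C.nondeg ap))]
    ring
  obtain rfl | hiB := eq_or_ne i B
  · rw [filter_lab_eq_pair hlabbm hlabbp honlyB, sum_pair hB, mem_left h1 le_rfl,
      mem_right h3 le_rfl, notMem (.inr (C.nondeg bm)) (.inl (by linarith)),
      notMem (.inr (by linarith)) (.inr (C.nondeg bp))]
    ring
  refine sum_eq_zero fun j hj => sub_eq_zero.2 (siphonShift_hi_eq_lo ?_ ?_ ?_ ?_ h1 h3) <;>
    rintro rfl <;> simp_all

theorem abs_massCoord_add_siphonShift_le (hδ : 0 ≤ δ) (hsep : C.lo bm < C.hi ap)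
    (hneg : massCoord (C.lo bm) + δ ≤ 0) (hpos : δ ≤ massCoord (C.hi ap)) (x : ℝ) :
    |massCoord x + C.siphonShift δ am bm ap bp x| ≤ |massCoord x| := by
  by_cases hl : x ∈ Set.Icc (C.hi am) (C.lo bm)
  · have := strictMono_massCoord.monotone hl.2
    rw [siphonShift_of_mem_left hsep hl, abs_of_nonpos (by linarith),
      abs_of_nonpos (by linarith)]
    linarith
  by_cases hr : x ∈ Set.Icc (C.hi ap) (C.lo bp)
  · have := strictMono_massCoord.monotone hr.1
    rw [siphonShift_of_mem_right hsep hr, abs_of_nonneg (by linarith),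
      abs_of_nonneg (by linarith)]
    linarith
  rw [siphonShift_of_notMem hl hr, add_zero]

theorem abs_massCoord_add_siphonShift_lo_lt (hδ : 0 < δ) (h1 : C.hi am ≤ C.lo bm)
    (hsep : C.lo bm < C.hi ap) (hneg : massCoord (C.lo bm) + δ ≤ 0) :
    |massCoord (C.lo bm) + C.siphonShift δ am bm ap bp (C.lo bm)| < |massCoord (C.lo bm)| := by
  rw [siphonShift_of_mem_left hsep ⟨h1, le_rfl⟩, abs_of_nonpos hneg, abs_of_neg (by linarith)]
  linarith

end Config

theorem simultaneous_mass_siphoning_general (n k : ℕ) (C : Config n k) (hC : C.Condensed)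
    (A B : Fin n)
    (am ap bm bp : Fin k) (hA : am ≠ ap) (hB : bm ≠ bp)
    (hlabam : C.lab am = A) (hlabap : C.lab ap = A)
    (hlabbm : C.lab bm = B) (hlabbp : C.lab bp = B)
    (honlyA : ∀ j, C.lab j = A → j = am ∨ j = ap)
    (honlyB : ∀ j, C.lab j = B → j = bm ∨ j = bp)
    (h1 : C.hi am ≤ C.lo bm) (h2 : C.hi bm ≤ C.lo ap) (h3 : C.hi ap ≤ C.lo bp) :
    ∃ (k' : ℕ) (C' : Config n k'),
      (∀ i, C'.mass i = C.mass i) ∧ C'.perim < C.perim := by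
  have := C.nondeg bm
  have := C.nondeg ap
  have hbm_neg : C.lo bm < 0 := by
    by_contra! h
    exact hB (hC.eq_of_lab_eq_of_lo_nonneg (hlabbm.trans hlabbp.symm) h (by linarith))
  have hap_pos : 0 < C.hi ap := by
    by_contra! h
    exact hA (hC.eq_of_lab_eq_of_hi_nonpos (hlabam.trans hlabap.symm) (by linarith) h)
  have hsep : C.lo bm < C.hi ap := by linarith
  have hF := strictMono_massCoord
  have hF0 : massCoord 0 = 0 := by simp [massCoord]
  obtain ⟨δ, hδ, hδlt⟩ := exists_between <| lt_min
    (lt_min (sub_pos.2 (hF (C.nondeg bm))) (sub_pos.2 (hF (C.nondeg ap))))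
    (lt_min (neg_pos.2 (hF0 ▸ hF hbm_neg)) (hF0 ▸ hF hap_pos))
  simp only [lt_min_iff] at hδlt
  exact ⟨k, C.exists_perim_lt_of_massCoord_shift (C.siphonShift (δ / 2) am bm ap bp)
    (Config.strictMonoOn_massCoord_add_siphonShift (by linarith) (by linarith) (by linarith))
    (Config.sum_siphonShift_sub_eq_zero hlabam hlabap hlabbm hlabbp hA hB honlyA honlyB h1 h2 h3)
    (fun x _ => Config.abs_massCoord_add_siphonShift_le (by linarith) hsep (by linarith)
      (by linarith) x)
    ⟨C.lo bm, C.lo_mem_endpointSet bm,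
      Config.abs_massCoord_add_siphonShift_lo_lt (by linarith) h1 hsep (by linarith)⟩⟩

/-- Simultaneous Mass Siphoning: if a condensed configuration contains two regions `A`
and `B`, each made of exactly two intervals appearing in the alternating left-to-right
order `A⁻, B⁻, A⁺, B⁺`, then some configuration with the same list of weighted masses
has strictly smaller total weighted perimeter. -/
theorem simultaneous_mass_siphoning (n k : ℕ) (C : Config n k) (hC : C.Condensed)
    (A B : Fin n) (hAB : A ≠ B)
    (am ap bm bp : Fin k) (hA : am ≠ ap) (hB : bm ≠ bp)
    (hlabam : C.lab am = A) (hlabap : C.lab ap = A)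
    (hlabbm : C.lab bm = B) (hlabbp : C.lab bp = B)
    (honlyA : ∀ j, C.lab j = A → j = am ∨ j = ap)
    (honlyB : ∀ j, C.lab j = B → j = bm ∨ j = bp)
    (h1 : C.hi am ≤ C.lo bm) (h2 : C.hi bm ≤ C.lo ap) (h3 : C.hi ap ≤ C.lo bp) :
    ∃ (k' : ℕ) (C' : Config n k'),
      (∀ i, C'.mass i = C.mass i) ∧ C'.perim < C.perim :=
  simultaneous_mass_siphoning_general n k C hC A B am ap bm bp hA hB hlabam hlabap hlabbm hlabbp
    honlyA honlyB h1 h2 h3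
end

section
/- Let C be a condensed configuration of n regions on ℝ with density |x| containing two regions A and B nested around the origin as follows: for some real numbers a > b > 0 and d > c > 0, region B consists of the intervals [−b,0] and [0,c] (so its union is [−b,c], which contains 0 in its interior), and region A consists of the intervals [−a,−b] and [c,d] immediately surrounding B. Then there exists a configuration of n regions with the same list of weighted masses whose total weighted perimeter is strictly smaller than that of C. -/
open MeasureTheory Finset

lemma abs_intInt (p q : ℝ) : ∫ x in p..q, |x| = (q * |q| - p * |p|) / 2 := by
  have base : ∀ r : ℝ, ∫ x in (0:ℝ)..r, |x| = r * |r| / 2 := by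
    intro r
    rcases le_or_gt 0 r with hr | hr
    · rw [intervalIntegral.integral_congr (g := fun x => x)
        (fun x hx => abs_of_nonneg (by
          rw [Set.uIcc_of_le hr] at hx; exact hx.1)),
        integral_id, abs_of_nonneg hr]
      ring
    · rw [intervalIntegral.integral_congr (g := fun x => -x)
        (fun x hx => abs_of_nonpos (by
          rw [Set.uIcc_of_ge hr.le] at hx; exact hx.2)),
        intervalIntegral.integral_neg, integral_id, abs_of_neg hr]
      ring
  have h1 : ∫ x in p..q, |x| = (∫ x in p..(0:ℝ), |x|) + ∫ x in (0:ℝ)..q, |x| :=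
    (intervalIntegral.integral_add_adjacent_intervals
      (continuous_abs.intervalIntegrable _ _) (continuous_abs.intervalIntegrable _ _)).symm
  rw [h1, intervalIntegral.integral_symm, base p, base q]; ring

lemma ioo_sep {p q r s : ℝ} (hpq : p < q) (hrs : r < s)
    (h : Set.Ioo p q ∩ Set.Ioo r s = ∅) : q ≤ r ∨ s ≤ p := by
  by_contra hcon
  push_neg at hcon
  have hx : (max p r + min q s) / 2 ∈ Set.Ioo p q ∩ Set.Ioo r s := by
    have h1 : max p r < min q s := by
      rcases max_cases p r with ⟨h1, _⟩ | ⟨h1, _⟩ <;> rcases min_cases q s with ⟨h2, _⟩ | ⟨h2, _⟩ <;>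
        rw [h1, h2] <;> [exact hpq; exact hcon.2; exact hcon.1; exact hrs]
    constructor <;> constructor
    · have := le_max_left p r; linarith
    · have := min_le_left q s; linarith
    · have := le_max_right p r; linarith
    · have := min_le_right q s; linarith
  rw [h] at hx
  exact hx

theorem key (n k : ℕ) (C : Config n k)
    (A B : Fin n) (hAB : A ≠ B)
    (a b c d : ℝ) (hba : b < a) (hb : 0 < b) (hcd : c < d) (hc : 0 < c)
    (jBm jBp jAm jAp : Fin k)
    (hBm : C.lo jBm = -b ∧ C.hi jBm = 0 ∧ C.lab jBm = B)
    (hBp : C.lo jBp = 0 ∧ C.hi jBp = c ∧ C.lab jBp = B)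
    (hAm : C.lo jAm = -a ∧ C.hi jAm = -b ∧ C.lab jAm = A)
    (hAp : C.lo jAp = c ∧ C.hi jAp = d ∧ C.lab jAp = A)
    (honlyA : ∀ j, C.lab j = A → j = jAm ∨ j = jAp)
    (honlyB : ∀ j, C.lab j = B → j = jBm ∨ j = jBp)
    (u v : ℝ) (hau : -a < u) (hu0 : u < 0) (h0v : 0 < v) (hvd : v < d)
    (hmass : u ^ 2 + v ^ 2 = b ^ 2 + c ^ 2) (hpe : -u + v < b + c) :
    ∃ (k' : ℕ) (C' : Config n k'),
      (∀ i, C'.mass i = C.mass i) ∧ C'.perim < C.perim := by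
  obtain ⟨hBm1, hBm2, hBm3⟩ := hBm
  obtain ⟨hBp1, hBp2, hBp3⟩ := hBp
  obtain ⟨hAm1, hAm2, hAm3⟩ := hAm
  obtain ⟨hAp1, hAp2, hAp3⟩ := hAp
  -- index distinctness
  have d1 : jAm ≠ jBm := fun h => hAB (hAm3 ▸ h ▸ hBm3 ▸ rfl)
  have d2 : jAm ≠ jBp := fun h => hAB (hAm3 ▸ h ▸ hBp3 ▸ rfl)
  have d3 : jAp ≠ jBm := fun h => hAB (hAp3 ▸ h ▸ hBm3 ▸ rfl)
  have d4 : jAp ≠ jBp := fun h => hAB (hAp3 ▸ h ▸ hBp3 ▸ rfl)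
  have d5 : jAm ≠ jAp := fun h => by
    have := hAm2 ▸ h ▸ hAp2; linarith [this]
  have d6 : jBm ≠ jBp := fun h => by
    have := hBm2 ▸ h ▸ hBp2; linarith [this]
  -- outside intervals
  have hout : ∀ j, j ≠ jAm → j ≠ jBm → j ≠ jBp → j ≠ jAp →
      C.hi j ≤ -a ∨ d ≤ C.lo j := by
    intro j h1 h2 h3 h4
    have nj := C.nondeg j
    have m1 := ioo_sep nj (by rw [hAm1, hAm2]; linarith) (C.disj j jAm h1)
    have m2 := ioo_sep nj (by rw [hBm1, hBm2]; linarith) (C.disj j jBm h2)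
    have m3 := ioo_sep nj (by rw [hBp1, hBp2]; linarith) (C.disj j jBp h3)
    have m4 := ioo_sep nj (by rw [hAp1, hAp2]; linarith) (C.disj j jAp h4)
    rw [hAm1, hAm2] at m1; rw [hBm1, hBm2] at m2
    rw [hBp1, hBp2] at m3; rw [hAp1, hAp2] at m4
    rcases m1 with m1 | m1
    · exact Or.inl m1
    · right
      rcases m2 with m2 | m2
      · linarith
      rcases m3 with m3 | m3
      · linarith
      rcases m4 with m4 | m4
      · linarith
      · exact m4
  -- derived inequalities
  -- derived inequalities
  have hub : u ≠ -b := by intro h; nlinarith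
  have hvc : v ≠ c := by intro h; nlinarith
  -- new bounds
  set f : Fin k → ℝ := fun j => if j = jBm then u else if j = jAp then v else C.lo j with hf
  set g : Fin k → ℝ := fun j => if j = jAm then u else if j = jBp then v else C.hi j with hg
  have hfAm : f jAm = -a := by simp [hf, d1, d5, hAm1]
  have hgAm : g jAm = u := by simp [hg]
  have hfBm : f jBm = u := by simp [hf]
  have hgBm : g jBm = 0 := by simp [hg, d1.symm, d6, hBm2]
  have hfBp : f jBp = 0 := by simp [hf, d6.symm, d4.symm, hBp1]
  have hgBp : g jBp = v := by simp [hg, d2.symm]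
  have hfAp : f jAp = v := by simp [hf, d3]
  have hgAp : g jAp = d := by simp [hg, d5.symm, d4, hAp2]
  have hfo : ∀ j, j ≠ jAm → j ≠ jBm → j ≠ jBp → j ≠ jAp → f j = C.lo j ∧ g j = C.hi j := by
    intro j h1 h2 h3 h4
    constructor
    · simp [hf, h2, h4]
    · simp [hg, h1, h3]
  have hcat : ∀ m : Fin k, m = jAm ∨ m = jBm ∨ m = jBp ∨ m = jAp ∨
      (m ≠ jAm ∧ m ≠ jBm ∧ m ≠ jBp ∧ m ≠ jAp) := by
    intro m
    by_cases e1 : m = jAm; · exact Or.inl e1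
    by_cases e2 : m = jBm; · exact Or.inr (Or.inl e2)
    by_cases e3 : m = jBp; · exact Or.inr (Or.inr (Or.inl e3))
    by_cases e4 : m = jAp; · exact Or.inr (Or.inr (Or.inr (Or.inl e4)))
    exact Or.inr (Or.inr (Or.inr (Or.inr ⟨e1, e2, e3, e4⟩)))
  have hnd : ∀ j, f j < g j := by
    intro j
    rcases hcat j with h | h | h | h | ⟨h1, h2, h3, h4⟩
    · rw [h, hfAm, hgAm]; linarith
    · rw [h, hfBm, hgBm]; exact hu0
    · rw [h, hfBp, hgBp]; exact h0v
    · rw [h, hfAp, hgAp]; exact hvd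
    · rw [(hfo j h1 h2 h3 h4).1, (hfo j h1 h2 h3 h4).2]; exact C.nondeg j
  have ioo_disj : ∀ {p q r s : ℝ}, (q ≤ r ∨ s ≤ p) →
      Set.Ioo p q ∩ Set.Ioo r s = ∅ := by
    intro p q r s h
    rw [Set.eq_empty_iff_forall_notMem]
    rintro x ⟨⟨x1, x2⟩, x3, x4⟩
    rcases h with h | h <;> linarith
  have hdj : ∀ i j, i ≠ j → Set.Ioo (f i) (g i) ∩ Set.Ioo (f j) (g j) = ∅ := by
    intro i j hij
    rcases hcat i with h | h | h | h | ⟨h1, h2, h3, h4⟩ <;>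
      rcases hcat j with h' | h' | h' | h' | ⟨h5, h6, h7, h8⟩
    all_goals first
    | exact absurd (h.trans h'.symm) hij
    | (rw [(hfo _ h1 h2 h3 h4).1, (hfo _ h1 h2 h3 h4).2,
           (hfo _ h5 h6 h7 h8).1, (hfo _ h5 h6 h7 h8).2]
       exact C.disj _ _ hij)
    | (rw [h, h']
       simp only [hfAm, hgAm, hfBm, hgBm, hfBp, hgBp, hfAp, hgAp]
       apply ioo_disj
       first | (left; linarith) | (right; linarith))
    | (rw [h, (hfo _ h5 h6 h7 h8).1, (hfo _ h5 h6 h7 h8).2]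
       simp only [hfAm, hgAm, hfBm, hgBm, hfBp, hgBp, hfAp, hgAp]
       rcases hout _ h5 h6 h7 h8 with ho | ho <;>
         (apply ioo_disj
          first
          | (left; linarith [C.nondeg j])
          | (right; linarith [C.nondeg j])))
    | (rw [h', (hfo _ h1 h2 h3 h4).1, (hfo _ h1 h2 h3 h4).2]
       simp only [hfAm, hgAm, hfBm, hgBm, hfBp, hgBp, hfAp, hgAp]
       rcases hout _ h1 h2 h3 h4 with ho | ho <;>
         (apply ioo_disj
          first
          | (left; linarith [C.nondeg i])
          | (right; linarith [C.nondeg i])))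
  refine ⟨k, ⟨f, g, C.lab, hnd, hdj⟩, ?_, ?_⟩
  · -- masses agree
    intro i
    simp only [Config.mass]
    by_cases hiA : i = A
    · subst hiA
      have hfil : univ.filter (fun j => C.lab j = i) = {jAm, jAp} := by
        ext j
        simp only [mem_filter, mem_univ, true_and, mem_insert, mem_singleton]
        exact ⟨honlyA j, by rintro (rfl | rfl); exacts [hAm3, hAp3]⟩
      rw [hfil, Finset.sum_pair d5, Finset.sum_pair d5,
        hfAm, hgAm, hfAp, hgAp, hAm1, hAm2, hAp1, hAp2,
        abs_intInt, abs_intInt, abs_intInt, abs_intInt,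
        abs_of_neg hu0, abs_of_pos h0v, abs_of_neg (show -a < 0 by linarith),
        abs_of_neg (show -b < 0 by linarith), abs_of_pos hc,
        abs_of_pos (show (0:ℝ) < d by linarith)]
      linear_combination (-1/2 : ℝ) * hmass
    by_cases hiB : i = B
    · subst hiB
      have hfil : univ.filter (fun j => C.lab j = i) = {jBm, jBp} := by
        ext j
        simp only [mem_filter, mem_univ, true_and, mem_insert, mem_singleton]
        exact ⟨honlyB j, by rintro (rfl | rfl); exacts [hBm3, hBp3]⟩
      rw [hfil, Finset.sum_pair d6, Finset.sum_pair d6,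
        hfBm, hgBm, hfBp, hgBp, hBm1, hBm2, hBp1, hBp2,
        abs_intInt, abs_intInt, abs_intInt, abs_intInt,
        abs_of_neg hu0, abs_of_pos h0v,
        abs_of_neg (show -b < 0 by linarith), abs_of_pos hc]
      simp only [abs_zero]
      linear_combination (1/2 : ℝ) * hmass
    · refine Finset.sum_congr rfl ?_
      intro j hj
      have hjl : C.lab j = i := (mem_filter.1 hj).2
      have h1 : j ≠ jAm := fun e => hiA (by rw [← hjl, e, hAm3])
      have h4 : j ≠ jAp := fun e => hiA (by rw [← hjl, e, hAp3])
      have h2 : j ≠ jBm := fun e => hiB (by rw [← hjl, e, hBm3])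
      have h3 : j ≠ jBp := fun e => hiB (by rw [← hjl, e, hBp3])
      rw [(hfo j h1 h2 h3 h4).1, (hfo j h1 h2 h3 h4).2]
  · -- perimeter strictly decreases
    have hEbound : ∀ x ∈ C.endpointSet, x ≤ -a ∨ x = -b ∨ x = 0 ∨ x = c ∨ d ≤ x := by
      intro x hx
      simp only [Config.endpointSet, mem_union, mem_image, mem_univ, true_and] at hx
      rcases hx with ⟨j, rfl⟩ | ⟨j, rfl⟩ <;>
        rcases hcat j with h | h | h | h | ⟨h1, h2, h3, h4⟩
      · exact Or.inl (le_of_eq (by rw [h, hAm1]))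
      · exact Or.inr (Or.inl (by rw [h, hBm1]))
      · exact Or.inr (Or.inr (Or.inl (by rw [h, hBp1])))
      · exact Or.inr (Or.inr (Or.inr (Or.inl (by rw [h, hAp1]))))
      · rcases hout _ h1 h2 h3 h4 with ho | ho
        · exact Or.inl (by linarith [C.nondeg j])
        · exact Or.inr (Or.inr (Or.inr (Or.inr (by linarith [C.nondeg j]))))
      · exact Or.inr (Or.inl (by rw [h, hAm2]))
      · exact Or.inr (Or.inr (Or.inl (by rw [h, hBm2])))
      · exact Or.inr (Or.inr (Or.inr (Or.inl (by rw [h, hBp2]))))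
      · exact Or.inr (Or.inr (Or.inr (Or.inr (le_of_eq (by rw [h, hAp2])))))
      · rcases hout _ h1 h2 h3 h4 with ho | ho
        · exact Or.inl ho
        · exact Or.inr (Or.inr (Or.inr (Or.inr (by linarith [C.nondeg j]))))
    have huE : u ∉ C.endpointSet := by
      intro hx
      rcases hEbound u hx with h | h | h | h | h <;> first | linarith | exact hub h
    have hvE : v ∉ C.endpointSet := by
      intro hx
      rcases hEbound v hx with h | h | h | h | h <;> first | linarith | exact hvc h
    have hE' : (Config.mk f g C.lab hnd hdj : Config n k).endpointSet =
        (C.endpointSet \ {-b, c}) ∪ {u, v} := by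
      ext x
      simp only [Config.endpointSet, mem_union, mem_image, mem_univ, true_and,
        mem_sdiff, mem_insert, mem_singleton, not_or]
      constructor
      · rintro (⟨j, rfl⟩ | ⟨j, rfl⟩)
        · rcases hcat j with h | h | h | h | ⟨h1, h2, h3, h4⟩
          · rw [h, hfAm]
            exact Or.inl ⟨Or.inl ⟨jAm, hAm1⟩,
              by intro hq; linarith, by intro hq; linarith⟩
          · rw [h, hfBm]; exact Or.inr (Or.inl rfl)
          · rw [h, hfBp]
            exact Or.inl ⟨Or.inl ⟨jBp, hBp1⟩,
              by intro hq; linarith, by intro hq; linarith⟩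
          · rw [h, hfAp]; exact Or.inr (Or.inr rfl)
          · rw [(hfo j h1 h2 h3 h4).1]
            refine Or.inl ⟨Or.inl ⟨j, rfl⟩, ?_, ?_⟩ <;>
              rcases hout _ h1 h2 h3 h4 with ho | ho <;>
                (intro hq; linarith [C.nondeg j])
        · rcases hcat j with h | h | h | h | ⟨h1, h2, h3, h4⟩
          · rw [h, hgAm]; exact Or.inr (Or.inl rfl)
          · rw [h, hgBm]
            exact Or.inl ⟨Or.inr ⟨jBm, hBm2⟩,
              by intro hq; linarith, by intro hq; linarith⟩
          · rw [h, hgBp]; exact Or.inr (Or.inr rfl)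
          · rw [h, hgAp]
            exact Or.inl ⟨Or.inr ⟨jAp, hAp2⟩,
              by intro hq; linarith, by intro hq; linarith⟩
          · rw [(hfo j h1 h2 h3 h4).2]
            refine Or.inl ⟨Or.inr ⟨j, rfl⟩, ?_, ?_⟩ <;>
              rcases hout _ h1 h2 h3 h4 with ho | ho <;>
                (intro hq; linarith [C.nondeg j])
      · rintro (⟨hE, hxb, hxc⟩ | rfl | rfl)
        · rcases hE with ⟨j, rfl⟩ | ⟨j, rfl⟩
          · rcases hcat j with h | h | h | h | ⟨h1, h2, h3, h4⟩
            · exact Or.inl ⟨jAm, by rw [hfAm, h, hAm1]⟩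
            · exact absurd (by rw [h, hBm1]) hxb
            · exact Or.inl ⟨jBp, by rw [hfBp, h, hBp1]⟩
            · exact absurd (by rw [h, hAp1]) hxc
            · exact Or.inl ⟨j, (hfo j h1 h2 h3 h4).1⟩
          · rcases hcat j with h | h | h | h | ⟨h1, h2, h3, h4⟩
            · exact absurd (by rw [h, hAm2]) hxb
            · exact Or.inr ⟨jBm, by rw [hgBm, h, hBm2]⟩
            · exact absurd (by rw [h, hBp2]) hxc
            · exact Or.inr ⟨jAp, by rw [hgAp, h, hAp2]⟩
            · exact Or.inr ⟨j, (hfo j h1 h2 h3 h4).2⟩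
        · exact Or.inr ⟨jAm, hgAm⟩
        · exact Or.inr ⟨jBp, hgBp⟩
    have hbc_sub : ({-b, c} : Finset ℝ) ⊆ C.endpointSet := by
      intro x hx
      simp only [mem_insert, mem_singleton] at hx
      simp only [Config.endpointSet, mem_union, mem_image, mem_univ, true_and]
      rcases hx with rfl | rfl
      · exact Or.inr ⟨jAm, hAm2⟩
      · exact Or.inr ⟨jBp, hBp2⟩
    have hdisj : Disjoint (C.endpointSet \ {-b, c}) ({u, v} : Finset ℝ) := by
      rw [Finset.disjoint_right]
      intro x hx hx'
      simp only [mem_insert, mem_singleton] at hx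
      rcases hx with rfl | rfl
      · exact huE (mem_sdiff.1 hx').1
      · exact hvE (mem_sdiff.1 hx').1
    simp only [Config.perim, hE']
    rw [Finset.sum_union hdisj, Finset.sum_sdiff_eq_sub hbc_sub,
      Finset.sum_pair (show -b ≠ c by intro hq; linarith),
      Finset.sum_pair (show u ≠ v by intro hq; linarith),
      abs_of_neg (show -b < 0 by linarith), abs_of_pos hc,
      abs_of_neg hu0, abs_of_pos h0v]
    linarith

set_option maxHeartbeats 1000000 in
/-- If in a condensed configuration a region `B` consisting of the intervals `[-b,0]`
and `[0,c]` is nested directly around the origin and immediately surrounded by a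
region `A` consisting of the intervals `[-a,-b]` and `[c,d]`, then some configuration
with the same list of weighted masses has strictly smaller total weighted perimeter. -/
theorem unnest_around_origin (n k : ℕ) (C : Config n k) (hC : C.Condensed)
    (A B : Fin n) (hAB : A ≠ B)
    (a b c d : ℝ) (hba : b < a) (hb : 0 < b) (hcd : c < d) (hc : 0 < c)
    (jBm jBp jAm jAp : Fin k)
    (hBm : C.lo jBm = -b ∧ C.hi jBm = 0 ∧ C.lab jBm = B)
    (hBp : C.lo jBp = 0 ∧ C.hi jBp = c ∧ C.lab jBp = B)
    (hAm : C.lo jAm = -a ∧ C.hi jAm = -b ∧ C.lab jAm = A)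
    (hAp : C.lo jAp = c ∧ C.hi jAp = d ∧ C.lab jAp = A)
    (honlyA : ∀ j, C.lab j = A → j = jAm ∨ j = jAp)
    (honlyB : ∀ j, C.lab j = B → j = jBm ∨ j = jBp) :
    ∃ (k' : ℕ) (C' : Config n k'),
      (∀ i, C'.mass i = C.mass i) ∧ C'.perim < C.perim := by
  rcases le_or_gt b c with hbc | hbc
  · -- move the right endpoint of B outward
    set ε := min ((d - c) / 2) (b ^ 2 / (4 * c + 2 * b)) with hεdef
    have hε0 : 0 < ε := lt_min (by linarith) (by positivity)
    have hε1 : ε ≤ (d - c) / 2 := min_le_left _ _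
    have hε2 : ε ≤ b ^ 2 / (4 * c + 2 * b) := min_le_right _ _
    have hεle : ε * (4 * c + 2 * b) ≤ b ^ 2 := (le_div_iff₀ (by positivity)).1 hε2
    have hεb : ε < b := by nlinarith [hεle, hε0, hb, hc]
    have hkey : 2 * c * ε + ε ^ 2 ≤ b ^ 2 / 2 := by nlinarith [hεle, hεb, hε0, hb, hc]
    set s := Real.sqrt (b ^ 2 - 2 * c * ε - ε ^ 2) with hsdef
    have hsq : s ^ 2 = b ^ 2 - 2 * c * ε - ε ^ 2 := Real.sq_sqrt (by nlinarith)
    have hspos : 0 < s := Real.sqrt_pos.2 (by nlinarith)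
    have hslt : s < b - ε := by
      rw [hsdef, show b - ε = Real.sqrt ((b - ε) ^ 2) from
        (Real.sqrt_sq (by linarith)).symm]
      exact Real.sqrt_lt_sqrt (by nlinarith) (by nlinarith)
    exact key n k C A B hAB a b c d hba hb hcd hc jBm jBp jAm jAp hBm hBp hAm hAp
      honlyA honlyB (-s) (c + ε)
      (by linarith) (by linarith) (by linarith) (by linarith)
      (by linear_combination hsq) (by linarith)
  · -- move the left endpoint of B outward
    set ε := min ((a - b) / 2) (c ^ 2 / (4 * b + 2 * c)) with hεdef
    have hε0 : 0 < ε := lt_min (by linarith) (by positivity)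
    have hε1 : ε ≤ (a - b) / 2 := min_le_left _ _
    have hε2 : ε ≤ c ^ 2 / (4 * b + 2 * c) := min_le_right _ _
    have hεle : ε * (4 * b + 2 * c) ≤ c ^ 2 := (le_div_iff₀ (by positivity)).1 hε2
    have hεc : ε < c := by nlinarith [hεle, hε0, hb, hc]
    have hkey : 2 * b * ε + ε ^ 2 ≤ c ^ 2 / 2 := by nlinarith [hεle, hεc, hε0, hb, hc]
    set s := Real.sqrt (c ^ 2 - 2 * b * ε - ε ^ 2) with hsdef
    have hsq : s ^ 2 = c ^ 2 - 2 * b * ε - ε ^ 2 := Real.sq_sqrt (by nlinarith)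
    have hspos : 0 < s := Real.sqrt_pos.2 (by nlinarith)
    have hslt : s < c - ε := by
      rw [hsdef, show c - ε = Real.sqrt ((c - ε) ^ 2) from
        (Real.sqrt_sq (by linarith)).symm]
      exact Real.sqrt_lt_sqrt (by nlinarith) (by nlinarith)
    exact key n k C A B hAB a b c d hba hb hcd hc jBm jBp jAm jAp hBm hBp hAm hAp
      honlyA honlyB (-(b + ε)) s
      (by linarith) (by linarith) (by linarith) (by linarith)
      (by linear_combination hsq) (by linarith)
end

section
/- (Position of the origin.) Let C be a condensed configuration of n regions on ℝ with density |x| in which 0 lies in the interior of one of the intervals and 0 is not an endpoint of any interval. Then there exists a configuration of n regions with the same list of weighted masses whose total weighted perimeter is strictly smaller than that of C, and in which 0 is an endpoint of one of the intervals. -/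
open MeasureTheory Finset

/-! ### Auxiliary material -/

noncomputable def Fd (x : ℝ) : ℝ := x * |x| / 2
noncomputable def Gd (t : ℝ) : ℝ := if 0 ≤ t then Real.sqrt (2*t) else - Real.sqrt (-(2*t))

lemma Fd_zero : Fd 0 = 0 := by simp [Fd]
lemma Gd_zero : Gd 0 = 0 := by simp [Gd]

lemma Gd_Fd (x : ℝ) : Gd (Fd x) = x := by
  rcases le_or_gt 0 x with hx | hx
  · have h : 0 ≤ Fd x := by simp [Fd]; positivity
    rw [Gd, if_pos h]
    rw [Fd, abs_of_nonneg hx]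
    rw [show 2 * (x * x / 2) = x ^ 2 by ring, Real.sqrt_sq hx]
  · have h : ¬ 0 ≤ Fd x := by
      simp only [Fd, abs_of_neg hx, not_le]
      nlinarith
    rw [Gd, if_neg h, Fd, abs_of_neg hx]
    rw [show -(2 * (x * -x / 2)) = x ^ 2 by ring, Real.sqrt_sq_eq_abs, abs_of_neg hx]
    ring

lemma Fd_Gd (t : ℝ) : Fd (Gd t) = t := by
  rcases le_or_gt 0 t with ht | ht
  · rw [Gd, if_pos ht, Fd, abs_of_nonneg (Real.sqrt_nonneg _),
      Real.mul_self_sqrt (by linarith)]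
    ring
  · rw [Gd, if_neg (not_le.mpr ht), Fd, abs_neg, abs_of_nonneg (Real.sqrt_nonneg _),
      neg_mul, Real.mul_self_sqrt (by linarith)]
    ring

lemma Gd_strictMono : StrictMono Gd := by
  intro s t hst
  rcases le_or_gt 0 s with hs | hs
  · rw [Gd, Gd, if_pos hs, if_pos (by linarith)]
    exact Real.sqrt_lt_sqrt (by linarith) (by linarith)
  · rcases le_or_gt 0 t with ht | ht
    · rw [Gd, Gd, if_neg (not_le.mpr hs), if_pos ht]
      have : 0 < Real.sqrt (-(2*s)) := Real.sqrt_pos.mpr (by linarith)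
      have := Real.sqrt_nonneg (2*t)
      linarith
    · rw [Gd, Gd, if_neg (not_le.mpr hs), if_neg (not_le.mpr ht)]
      have : Real.sqrt (-(2*t)) < Real.sqrt (-(2*s)) := Real.sqrt_lt_sqrt (by linarith) (by linarith)
      linarith

lemma Fd_strictMono : StrictMono Fd := by
  intro x y h
  by_contra hc
  push_neg at hc
  have := Gd_strictMono.le_iff_le.mpr hc
  rw [Gd_Fd, Gd_Fd] at this
  exact absurd h (not_lt.mpr this)

lemma abs_Gd (t : ℝ) : |Gd t| = Real.sqrt (2*|t|) := by
  rcases le_or_gt 0 t with ht | ht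
  · rw [Gd, if_pos ht, abs_of_nonneg (Real.sqrt_nonneg _), abs_of_nonneg ht]
  · rw [Gd, if_neg (not_le.mpr ht), abs_of_nonpos (by simp [Real.sqrt_nonneg]),
      abs_of_neg ht]
    ring_nf

lemma integ_zero (y : ℝ) : ∫ x in (0:ℝ)..y, |x| = Fd y := by
  rcases le_or_gt 0 y with hy | hy
  · rw [intervalIntegral.integral_congr (g := fun x => x)
      (by intro x hx; rw [Set.uIcc_of_le hy] at hx; exact abs_of_nonneg hx.1),
      integral_id, Fd, abs_of_nonneg hy]
    ring
  · rw [intervalIntegral.integral_congr (g := fun x => -x)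
      (by intro x hx; rw [Set.uIcc_of_ge hy.le] at hx; exact abs_of_nonpos hx.2),
      intervalIntegral.integral_neg, integral_id, Fd, abs_of_neg hy]
    ring

lemma integ_abs (a b : ℝ) : ∫ x in a..b, |x| = Fd b - Fd a := by
  have h := intervalIntegral.integral_add_adjacent_intervals (μ := volume) (a := a) (b := 0)
    (c := b) (f := fun x => |x|) (continuous_abs.intervalIntegrable _ _)
    (continuous_abs.intervalIntegrable _ _)
  have h1 : ∫ x in a..(0:ℝ), |x| = - Fd a := by
    rw [intervalIntegral.integral_symm, integ_zero]
  rw [h1, integ_zero] at h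
  linarith [h]

lemma sqrt_strict_conc {u v p q : ℝ} (hu : 0 ≤ u) (hv : 0 ≤ v) (huv : u ≠ v)
    (hp : 0 < p) (hq : 0 < q) (hpq : p + q = 1) :
    p * Real.sqrt u + q * Real.sqrt v < Real.sqrt (p*u + q*v) := by
  have := Real.strictConcaveOn_sqrt.2 hu hv huv hp hq hpq
  simpa [smul_eq_mul] using this

lemma Ioo_disj_iff {a b c d : ℝ} (hab : a < b) (hcd : c < d)
    (h : Set.Ioo a b ∩ Set.Ioo c d = ∅) : b ≤ c ∨ d ≤ a := by
  by_contra hc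
  push_neg at hc
  have hm : (max a c + min b d) / 2 ∈ Set.Ioo a b ∩ Set.Ioo c d := by
    have h1 : a ≤ max a c := le_max_left a c
    have h2 : c ≤ max a c := le_max_right a c
    have h3 : min b d ≤ b := min_le_left b d
    have h4 : min b d ≤ d := min_le_right b d
    have h5 : max a c < min b d := by
      rcases hc with ⟨hcb, had⟩
      simp only [lt_min_iff, max_lt_iff]
      exact ⟨⟨hab, hcb⟩, ⟨had, hcd⟩⟩
    constructor <;> constructor <;> linarith
  rw [h] at hm
  exact hm

lemma Ioo_disj {a b c d : ℝ} (h : b ≤ c ∨ d ≤ a) : Set.Ioo a b ∩ Set.Ioo c d = ∅ := by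
  rw [Set.eq_empty_iff_forall_notMem]
  rintro x ⟨⟨h1, h2⟩, ⟨h3, h4⟩⟩
  rcases h with h | h <;> linarith

/-- Shift a configuration by `c` in the `Fd`-coordinates. -/
noncomputable def Config.shift {n k : ℕ} (C : Config n k) (c : ℝ) : Config n k where
  lo j := Gd (Fd (C.lo j) + c)
  hi j := Gd (Fd (C.hi j) + c)
  lab := C.lab
  nondeg j := Gd_strictMono (by have := Fd_strictMono (C.nondeg j); linarith)
  disj i j hij := by
    rcases Ioo_disj_iff (C.nondeg i) (C.nondeg j) (C.disj i j hij) with h | h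
    · exact Ioo_disj (Or.inl (Gd_strictMono.monotone
        (by have := Fd_strictMono.monotone h; linarith)))
    · exact Ioo_disj (Or.inr (Gd_strictMono.monotone
        (by have := Fd_strictMono.monotone h; linarith)))

lemma shift_mass {n k : ℕ} (C : Config n k) (c : ℝ) (i : Fin n) :
    (C.shift c).mass i = C.mass i := by
  unfold Config.mass Config.shift
  refine Finset.sum_congr rfl fun j _ => ?_
  rw [integ_abs, integ_abs, Fd_Gd, Fd_Gd]
  ring

lemma shift_perim {n k : ℕ} (C : Config n k) (c : ℝ) :
    (C.shift c).perim = ∑ x ∈ C.endpointSet, |Gd (Fd x + c)| := by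
  unfold Config.perim
  have himg : (C.shift c).endpointSet = Finset.image (fun x => Gd (Fd x + c)) C.endpointSet := by
    unfold Config.endpointSet Config.shift
    simp only [Finset.image_union, Finset.image_image]
    rfl
  rw [himg, Finset.sum_image]
  intro x _ y _ hxy
  have := Gd_strictMono.injective hxy
  have : Fd x = Fd y := by linarith
  have := Fd_strictMono.injective this
  exact this

/-- Position of the origin: if in a condensed configuration `0` lies in the interior of
one of the intervals and `0` is not an endpoint of any interval, then some
configuration with the same list of weighted masses has strictly smaller total weighted
perimeter and has `0` as an endpoint of one of its intervals. -/
theorem origin_at_an_endpoint (n k : ℕ) (C : Config n k) (hC : C.Condensed)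
    (hint : ∃ j, C.lo j < 0 ∧ 0 < C.hi j)
    (hnotend : ∀ j, C.lo j ≠ 0 ∧ C.hi j ≠ 0) :
    ∃ (k' : ℕ) (C' : Config n k'),
      (∀ i, C'.mass i = C.mass i) ∧ C'.perim < C.perim ∧
      (∃ j : Fin k', C'.lo j = 0 ∨ C'.hi j = 0) := by
  obtain ⟨j0, ha, hb⟩ := hint
  set a0 := C.lo j0 with ha0def
  set b0 := C.hi j0 with hb0def
  set c₁ := -Fd b0 with hc₁def
  set c₂ := -Fd a0 with hc₂def
  have hFa : Fd a0 < 0 := by have := Fd_strictMono ha; rwa [Fd_zero] at this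
  have hFb : 0 < Fd b0 := by have := Fd_strictMono hb; rwa [Fd_zero] at this
  have hc₁ : c₁ < 0 := by simp [hc₁def]; linarith
  have hc₂ : 0 < c₂ := by simp [hc₂def]; linarith
  set t := c₂ / (c₂ - c₁) with htdef
  have ht0 : 0 < t := div_pos hc₂ (by linarith)
  have ht1 : t < 1 := by
    rw [htdef, div_lt_one (by linarith)]
    linarith
  have hd : c₂ - c₁ ≠ 0 := by linarith
  have hmul : t * (c₂ - c₁) = c₂ := div_mul_cancel₀ c₂ hd
  have hcomb : t * c₁ + (1 - t) * c₂ = 0 := by linear_combination (-1 : ℝ) * hmul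
  -- all endpoints are outside (a0, b0)
  have hout : ∀ x ∈ C.endpointSet, x ≤ a0 ∨ b0 ≤ x := by
    intro x hx
    have key : ∀ j : Fin k, (x = C.lo j ∨ x = C.hi j) → x ≤ a0 ∨ b0 ≤ x := by
      intro j hj
      by_cases hjj : j = j0
      · subst hjj
        rcases hj with rfl | rfl
        · exact Or.inl le_rfl
        · exact Or.inr le_rfl
      · rcases Ioo_disj_iff (C.nondeg j) (C.nondeg j0) (C.disj j j0 hjj) with h | h
        · refine Or.inl ?_
          rcases hj with rfl | rfl
          · exact le_of_lt (lt_of_lt_of_le (C.nondeg j) h)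
          · exact h
        · refine Or.inr ?_
          rcases hj with rfl | rfl
          · exact h
          · exact le_of_lt (lt_of_le_of_lt h (C.nondeg j))
    unfold Config.endpointSet at hx
    rw [Finset.mem_union] at hx
    rcases hx with hx | hx <;>
      obtain ⟨j, _, rfl⟩ := Finset.mem_image.mp hx
    · exact key j (Or.inl rfl)
    · exact key j (Or.inr rfl)
  have hne : C.endpointSet.Nonempty :=
    ⟨C.lo j0, Finset.mem_union_left _ (Finset.mem_image_of_mem _ (Finset.mem_univ j0))⟩
  -- the key strict inequality
  have hterm : ∀ x ∈ C.endpointSet,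
      t * |Gd (Fd x + c₁)| + (1 - t) * |Gd (Fd x + c₂)| < |x| := by
    intro x hx
    rcases hout x hx with hxle | hxge
    · -- x ≤ a0 : everything is on the nonpositive side
      have hFx : Fd x ≤ Fd a0 := Fd_strictMono.monotone hxle
      have h2 : Fd x + c₂ ≤ 0 := by rw [hc₂def]; linarith
      have h1 : Fd x + c₁ ≤ 0 := by linarith
      have hFx0 : Fd x < 0 := by linarith
      have hxval : |x| = Real.sqrt (2 * -(Fd x)) := by
        rw [show (2 : ℝ) * -(Fd x) = 2 * |Fd x| by rw [abs_of_neg hFx0], ← abs_Gd, Gd_Fd]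
      rw [hxval, abs_Gd, abs_Gd, abs_of_nonpos h1, abs_of_nonpos h2]
      have harg : t * (2 * -(Fd x + c₁)) + (1 - t) * (2 * -(Fd x + c₂)) = 2 * -(Fd x) := by
        linear_combination (-2 : ℝ) * hcomb
      have h3 := sqrt_strict_conc (u := 2 * -(Fd x + c₁)) (v := 2 * -(Fd x + c₂))
        (p := t) (q := 1 - t)
        (by linarith) (by linarith) (by intro hc; rw [hc₁def, hc₂def] at hc; nlinarith)
        ht0 (by linarith) (by ring)
      rwa [harg] at h3
    · -- b0 ≤ x : everything is on the nonnegative side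
      have hFx : Fd b0 ≤ Fd x := Fd_strictMono.monotone hxge
      have h1 : 0 ≤ Fd x + c₁ := by rw [hc₁def]; linarith
      have h2 : 0 ≤ Fd x + c₂ := by linarith
      have hFx0 : 0 < Fd x := by linarith
      have hxval : |x| = Real.sqrt (2 * Fd x) := by
        rw [show (2 : ℝ) * Fd x = 2 * |Fd x| by rw [abs_of_pos hFx0], ← abs_Gd, Gd_Fd]
      rw [hxval, abs_Gd, abs_Gd, abs_of_nonneg h1, abs_of_nonneg h2]
      have harg : t * (2 * (Fd x + c₁)) + (1 - t) * (2 * (Fd x + c₂)) = 2 * Fd x := by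
        linear_combination (2 : ℝ) * hcomb
      have h3 := sqrt_strict_conc (u := 2 * (Fd x + c₁)) (v := 2 * (Fd x + c₂))
        (p := t) (q := 1 - t)
        (by linarith) (by linarith) (by intro hc; rw [hc₁def, hc₂def] at hc; nlinarith)
        ht0 (by linarith) (by ring)
      rwa [harg] at h3
  set h : ℝ → ℝ := fun c => ∑ x ∈ C.endpointSet, |Gd (Fd x + c)| with hdef
  have key : t * h c₁ + (1 - t) * h c₂ < C.perim := by
    have hsum := Finset.sum_lt_sum_of_nonempty hne hterm
    calc t * h c₁ + (1 - t) * h c₂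
        = ∑ x ∈ C.endpointSet, (t * |Gd (Fd x + c₁)| + (1 - t) * |Gd (Fd x + c₂)|) := by
          rw [hdef]; rw [Finset.mul_sum, Finset.mul_sum, ← Finset.sum_add_distrib]
      _ < ∑ x ∈ C.endpointSet, |x| := hsum
      _ = C.perim := rfl
  rcases le_total (h c₁) (h c₂) with hle | hle
  · refine ⟨k, C.shift c₁, fun i => shift_mass C c₁ i, ?_, ⟨j0, Or.inr ?_⟩⟩
    · rw [shift_perim]
      have h4 : (1 - t) * h c₁ ≤ (1 - t) * h c₂ :=
        mul_le_mul_of_nonneg_left hle (by linarith)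
      calc h c₁ = t * h c₁ + (1 - t) * h c₁ := by ring
        _ ≤ t * h c₁ + (1 - t) * h c₂ := by linarith
        _ < C.perim := key
    · show Gd (Fd (C.hi j0) + c₁) = 0
      rw [show Fd (C.hi j0) + c₁ = 0 by rw [hc₁def, hb0def]; ring, Gd_zero]
  · refine ⟨k, C.shift c₂, fun i => shift_mass C c₂ i, ?_, ⟨j0, Or.inl ?_⟩⟩
    · rw [shift_perim]
      have h4 : t * h c₂ ≤ t * h c₁ := mul_le_mul_of_nonneg_left hle (by linarith)
      calc h c₂ = t * h c₂ + (1 - t) * h c₂ := by ring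
        _ ≤ t * h c₁ + (1 - t) * h c₂ := by linarith
        _ < C.perim := key
    · show Gd (Fd (C.lo j0) + c₂) = 0
      rw [show Fd (C.lo j0) + c₂ = 0 by rw [hc₂def, ha0def]; ring, Gd_zero]
end
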